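/- arXiv:1507.02208 — 11 statements merged into one kernel-verified Lean document; each statement's English description precedes it below -/
import Mathlib

section
/- Let A ⊆ ℕ be an infinite set with increasing enumeration (n_k), and suppose there exists L ∈ ℕ such that liminf_{N→∞} #(A ∩ (N, (L+1)N]) ≥ L. Then sup { n - Σ{m ∈ A : m < n} : n ∈ A } < ∞. -/
lemma key_sum (A : Set ℕ) [DecidablePred (· ∈ A)] (L N₀ : ℕ) (hL : 0 < L)
    (hcard : ∀ N, N₀ ≤ N → L ≤ ((Finset.Ioc N ((L + 1) * N)).filter (· ∈ A)).card) :
    ∀ M, N₀ ≤ M → M ≤ (∑ m ∈ (Finset.Ioc N₀ M).filter (· ∈ A), m) + (L + 1) * N₀ := by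
  intro M
  induction M using Nat.strong_induction_on with
  | _ M ih =>
    intro hM
    by_cases hsmall : M ≤ (L + 1) * N₀
    · omega
    push_neg at hsmall
    obtain ⟨M', hM'⟩ : ∃ q, M / (L + 1) = q := ⟨_, rfl⟩
    have hdm : (L + 1) * M' + M % (L + 1) = M := by
      rw [← hM']; exact Nat.div_add_mod M (L + 1)
    have hmod : M % (L + 1) < L + 1 := Nat.mod_lt M (by omega)
    have h3 : (L + 1) * M' ≤ M := by omega
    have h4 : M ≤ (L + 1) * M' + L := by omega
    have h1 : N₀ ≤ M' := by
      rw [← hM']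
      rw [Nat.le_div_iff_mul_le (by omega : 0 < L + 1)]
      have : N₀ * (L + 1) = (L + 1) * N₀ := Nat.mul_comm _ _
      omega
    have h2 : M' < M := by
      have h5 : 2 * M' ≤ (L + 1) * M' := Nat.mul_le_mul_right _ (by omega)
      omega
    have IH := ih M' h2 h1
    have hc := hcard M' h1
    have hsum2 : L * (M' + 1) ≤
        ∑ m ∈ (Finset.Ioc M' ((L + 1) * M')).filter (· ∈ A), m := by
      calc L * (M' + 1)
          ≤ ((Finset.Ioc M' ((L + 1) * M')).filter (· ∈ A)).card * (M' + 1) :=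
            Nat.mul_le_mul_right _ hc
        _ ≤ ∑ m ∈ (Finset.Ioc M' ((L + 1) * M')).filter (· ∈ A), m := by
            rw [← smul_eq_mul]
            apply Finset.card_nsmul_le_sum
            intro x hx
            simp only [Finset.mem_filter, Finset.mem_Ioc] at hx
            omega
    have hdisj : Disjoint ((Finset.Ioc N₀ M').filter (· ∈ A))
        ((Finset.Ioc M' ((L + 1) * M')).filter (· ∈ A)) := by
      rw [Finset.disjoint_left]
      intro x hx hx'
      simp only [Finset.mem_filter, Finset.mem_Ioc] at hx hx'
      omega
    have hsub : (Finset.Ioc N₀ M').filter (· ∈ A) ∪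
        (Finset.Ioc M' ((L + 1) * M')).filter (· ∈ A) ⊆ (Finset.Ioc N₀ M).filter (· ∈ A) := by
      intro x hx
      rw [Finset.mem_union] at hx
      rcases hx with hx | hx <;>
      · rw [Finset.mem_filter, Finset.mem_Ioc] at hx ⊢
        exact ⟨⟨by omega, by omega⟩, hx.2⟩
    have htot : (∑ m ∈ (Finset.Ioc N₀ M').filter (· ∈ A), m) +
        (∑ m ∈ (Finset.Ioc M' ((L + 1) * M')).filter (· ∈ A), m) ≤
        ∑ m ∈ (Finset.Ioc N₀ M).filter (· ∈ A), m := by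
      rw [← Finset.sum_union hdisj]
      exact Finset.sum_le_sum_of_subset hsub
    have hring : (L + 1) * M' + L = L * (M' + 1) + M' := by ring
    omega

/-- If `liminf_N #(A ∩ (N,(L+1)N]) ≥ L` for some `L ∈ ℕ`, then each element of `A`
exceeds the sum of all smaller elements of `A` by a bounded amount. -/
theorem stmt1 (A : Set ℕ) [DecidablePred (· ∈ A)] (hA : A.Infinite)
    (h : ∃ L : ℕ, 0 < L ∧ ∀ᶠ N in Filter.atTop,
      L ≤ ((Finset.Ioc N ((L + 1) * N)).filter (· ∈ A)).card) :
    ∃ s : ℕ, ∀ n ∈ A, n ≤ (∑ m ∈ (Finset.range n).filter (· ∈ A), m) + s := by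
  obtain ⟨L, hL, hev⟩ := h
  obtain ⟨N₀, hN₀⟩ := Filter.eventually_atTop.mp hev
  refine ⟨(L + 1) * N₀ + N₀ + 1, fun n hn => ?_⟩
  by_cases hsm : n ≤ N₀
  · omega
  push_neg at hsm
  have hkey := key_sum A L N₀ hL hN₀ (n - 1) (by omega)
  have hsub : (Finset.Ioc N₀ (n - 1)).filter (· ∈ A) ⊆ (Finset.range n).filter (· ∈ A) := by
    intro x hx
    rw [Finset.mem_filter, Finset.mem_Ioc] at hx
    rw [Finset.mem_filter, Finset.mem_range]
    exact ⟨by omega, hx.2⟩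
  have hle : (∑ m ∈ (Finset.Ioc N₀ (n - 1)).filter (· ∈ A), m) ≤
      ∑ m ∈ (Finset.range n).filter (· ∈ A), m := Finset.sum_le_sum_of_subset hsub
  omega
end

section
/- Let C₁ ⊆ ℕ be weakly sublacunary (i.e., its increasing enumeration (m_k) satisfies m_{k+1}/m_k ≤ λ for some λ > 1 and all sufficiently large k), let C₂ ⊆ ℕ be infinite, and let α ∈ ℝ be irrational. Then Σ_{n ∈ C₁·C₂} ‖nα‖ = ∞, where ‖x‖ denotes the distance from x to the nearest integer. (More precisely: there exist infinitely many n ∈ C₁·C₂ with ‖nα‖ > 1/(4λ).) -/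
/-!
Pigeonholing the fractional parts of `nα`, `n ∈ C₂`, gives `u < v` in `C₂`, as large as we like,
with `δ = ‖(v - u)α‖` positive (α is irrational) but arbitrarily small. Sublacunarity of `C₁`
provides `m ∈ C₁` with `m ≤ 1/(2δ) < λm`, so `‖m(v - u)α‖ = mδ ∈ (1/(2λ), 1/2]`. By the triangle
inequality one of `‖mvα‖`, `‖muα‖` exceeds `1/(4λ)`.
-/

/-- Distance from a real number to the nearest integer. -/
noncomputable def intDist (x : ℝ) : ℝ := |x - round x|

open Filter

lemma intDist_le (x : ℝ) (z : ℤ) : intDist x ≤ |x - z| := round_le x z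

lemma intDist_add_int (x : ℝ) (z : ℤ) : intDist (x + z) = intDist x := by
  unfold intDist
  rw [round_add_intCast, Int.cast_add, add_sub_add_right_eq_sub]

lemma intDist_sub_le (x y : ℝ) : intDist (x - y) ≤ intDist x + intDist y := by
  refine (intDist_le (x - y) (round x - round y)).trans ?_
  have h : x - y - ((round x - round y : ℤ) : ℝ) = (x - round x) - (y - round y) := by
    push_cast; ring
  rw [h]
  exact abs_sub _ _

lemma intDist_sub_le_abs_fract_sub (x y : ℝ) :
    intDist (x - y) ≤ |Int.fract x - Int.fract y| := by
  refine (intDist_le (x - y) (⌊x⌋ - ⌊y⌋)).trans_eq ?_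
  rw [Int.fract, Int.fract]
  push_cast
  ring_nf

lemma intDist_eq_abs {x : ℝ} (hx : |x| ≤ 1 / 2) : intDist x = |x| := by
  refine le_antisymm (by simpa using intDist_le x 0) ?_
  rcases eq_or_ne (round x) 0 with h | h
  · simp [intDist, h]
  · have h1 : (1 : ℝ) ≤ |(round x : ℝ)| := by exact_mod_cast Int.one_le_abs h
    have h2 := abs_sub_abs_le_abs_sub (round x : ℝ) x
    rw [abs_sub_comm] at h2
    unfold intDist
    linarith

lemma intDist_natCast_mul {n : ℕ} {x : ℝ} (h : n * intDist x ≤ 1 / 2) :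
    intDist (n * x) = n * intDist x := by
  have hsplit : (n : ℝ) * x = n * (x - round x) + ((n * round x : ℤ) : ℝ) := by
    push_cast; ring
  have habs : |(n : ℝ) * (x - round x)| = n * intDist x := by
    rw [abs_mul, Nat.abs_cast, intDist]
  rw [hsplit, intDist_add_int, intDist_eq_abs (habs ▸ h), habs]

lemma Irrational.intDist_pos {x : ℝ} (hx : Irrational x) : 0 < intDist x :=
  abs_pos.mpr (sub_ne_zero.mpr (hx.ne_int _))

lemma eventually_exists_mem_le_lt_mul {C : Set ℕ} (hC : C.Infinite) {lam : ℝ}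
    (hsub : ∀ᶠ k in atTop, (Nat.nth (· ∈ C) (k + 1) : ℝ) ≤ lam * Nat.nth (· ∈ C) k) :
    ∀ᶠ x : ℝ in atTop, ∃ m ∈ C, (m : ℝ) ≤ x ∧ x < lam * m := by
  obtain ⟨K, hK⟩ := eventually_atTop.mp hsub
  have hmono : StrictMono (Nat.nth (· ∈ C)) := Nat.nth_strictMono hC
  filter_upwards [eventually_ge_atTop (Nat.nth (· ∈ C) K : ℝ)] with x hx
  have hex : ∃ j, x < Nat.nth (· ∈ C) j := by
    obtain ⟨n, hn⟩ := exists_nat_gt x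
    exact ⟨n, hn.trans_le (by exact_mod_cast hmono.id_le n)⟩
  have hKj : K < Nat.find hex := by
    by_contra! h
    exact (Nat.find_spec hex).not_ge (le_trans (by exact_mod_cast hmono.monotone h) hx)
  obtain ⟨k, hk⟩ : ∃ k, Nat.find hex = k + 1 := ⟨Nat.find hex - 1, by omega⟩
  have hxk : ¬ x < Nat.nth (· ∈ C) k := Nat.find_min hex (by omega)
  have hxk1 : x < Nat.nth (· ∈ C) (k + 1) := hk ▸ Nat.find_spec hex
  exact ⟨_, Nat.nth_mem_of_infinite hC k, not_lt.mp hxk, hxk1.trans_le (hK k (by omega))⟩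

lemma exists_intDist_sub_mul_lt {C : Set ℕ} (hC : C.Infinite) (α : ℝ) {ε : ℝ} (hε : 0 < ε)
    (M : ℕ) : ∃ u ∈ C, ∃ v ∈ C, M < u ∧ u < v ∧ intDist (((v - u : ℕ) : ℝ) * α) < ε := by
  obtain ⟨n, hn⟩ := exists_nat_one_div_lt hε
  set N : ℝ := n + 1
  have hN : 0 < N := by positivity
  set bucket : ℕ → ℤ := fun a ↦ ⌊Int.fract (a * α) * N⌋
  have hmaps : Set.MapsTo bucket (C \ Set.Iic M) (Set.Ico 0 (n + 1)) := fun a _ ↦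
    ⟨Int.floor_nonneg.mpr (by positivity),
      Int.floor_lt.mpr (by push_cast; nlinarith [Int.fract_lt_one (a * α)])⟩
  obtain ⟨a, ⟨haC, haM⟩, b, ⟨hbC, hbM⟩, hab, hbucket⟩ :=
    (hC.sdiff (Set.finite_Iic M)).exists_ne_map_eq_of_mapsTo hmaps (Set.finite_Ico _ _)
  have hclose : |Int.fract (b * α) - Int.fract (a * α)| < ε := by
    have h := Int.abs_sub_lt_one_of_floor_eq_floor hbucket.symm
    rw [← sub_mul, abs_mul, abs_of_pos hN, ← lt_div_iff₀ hN] at h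
    exact h.trans hn
  simp only [Set.mem_Iic, not_le] at haM hbM
  have hdiff_le : ∀ u v : ℕ, u < v →
      intDist (((v - u : ℕ) : ℝ) * α) ≤ |Int.fract (v * α) - Int.fract (u * α)| := by
    intro u v huv
    rw [Nat.cast_sub huv.le, sub_mul]
    exact intDist_sub_le_abs_fract_sub _ _
  rcases hab.lt_or_gt with h | h
  · exact ⟨a, haC, b, hbC, haM, h, (hdiff_le a b h).trans_lt hclose⟩
  · exact ⟨b, hbC, a, haC, hbM, h, (hdiff_le b a h).trans_lt (by rwa [abs_sub_comm])⟩

lemma exists_mem_lt_intDist_natCast_mul {C : Set ℕ} {lam : ℝ}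
    (hwin : ∀ᶠ x : ℝ in atTop, ∃ m ∈ C, (m : ℝ) ≤ x ∧ x < lam * m) :
    ∃ ε > 0, ∀ y : ℝ, 0 < intDist y → intDist y < ε →
      ∃ m ∈ C, 0 < m ∧ 1 / (2 * lam) < intDist (m * y) := by
  obtain ⟨X, hX⟩ := eventually_atTop.mp hwin
  refine ⟨1 / (2 * max X 1), by positivity, fun y hpos hsmall ↦ ?_⟩
  set δ := intDist y
  have hXδ : X ≤ 1 / (2 * δ) := by
    rw [lt_div_iff₀ (by positivity)] at hsmall
    rw [le_div_iff₀ (by positivity)]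
    nlinarith [le_max_left X 1, le_max_right X 1]
  obtain ⟨m, hmC, hmle, hmgt⟩ := hX _ hXδ
  have hx : 0 < 1 / (2 * δ) := by positivity
  have hm : 0 < m := Nat.pos_of_ne_zero fun h ↦ by
    rw [h, Nat.cast_zero, mul_zero] at hmgt
    linarith
  have hlam : 0 < lam := pos_of_mul_pos_left (hx.trans hmgt) (Nat.cast_nonneg m)
  have hhalf : m * δ ≤ 1 / 2 := by
    rw [le_div_iff₀ (by positivity)] at hmle
    linarith
  refine ⟨m, hmC, hm, ?_⟩
  rw [intDist_natCast_mul hhalf]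
  rw [div_lt_iff₀ (by positivity)] at hmgt
  rw [div_lt_iff₀ (by positivity)]
  linarith

theorem stmt2_general (C₁ C₂ : Set ℕ) (hC₁ : C₁.Infinite) (hC₂ : C₂.Infinite)
    (lam : ℝ)
    (hsub : ∀ᶠ k in Filter.atTop,
      (Nat.nth (· ∈ C₁) (k + 1) : ℝ) ≤ lam * Nat.nth (· ∈ C₁) k)
    (α : ℝ) (hα : Irrational α) :
    {n : ℕ | (∃ m₁ ∈ C₁, ∃ m₂ ∈ C₂, n = m₁ * m₂) ∧
      1 / (4 * lam) < intDist ((n : ℝ) * α)}.Infinite := by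
  obtain ⟨ε, hε, hmul⟩ :=
    exists_mem_lt_intDist_natCast_mul (eventually_exists_mem_le_lt_mul hC₁ hsub)
  refine Set.infinite_of_forall_exists_gt fun M ↦ ?_
  obtain ⟨u, huC, v, hvC, hMu, huv, hsmall⟩ := exists_intDist_sub_mul_lt hC₂ α hε.lt M
  obtain ⟨m, hmC, hm, hbig⟩ :=
    hmul _ (hα.natCast_mul (by omega)).intDist_pos hsmall
  have htri : intDist (m * (((v - u : ℕ) : ℝ) * α)) ≤
      intDist (((m * v : ℕ) : ℝ) * α) + intDist (((m * u : ℕ) : ℝ) * α) := by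
    rw [Nat.cast_sub huv.le]
    convert intDist_sub_le _ _ using 2
    push_cast
    ring
  have hquarter : 1 / (2 * lam) = 1 / (4 * lam) + 1 / (4 * lam) := by ring
  by_cases hv : 1 / (4 * lam) < intDist (((m * v : ℕ) : ℝ) * α)
  · exact ⟨m * v, ⟨⟨m, hmC, v, hvC, rfl⟩, hv⟩,
      (hMu.trans huv).trans_le (Nat.le_mul_of_pos_left v hm)⟩
  · exact ⟨m * u, ⟨⟨m, hmC, u, huC, rfl⟩, by linarith⟩,
      hMu.trans_le (Nat.le_mul_of_pos_left u hm)⟩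

/-- If `C₁` is weakly sublacunary (ratios of consecutive elements eventually bounded by
`λ > 1`) and `C₂` is infinite, then for every irrational `α` there are infinitely many
`n ∈ C₁·C₂` with `‖nα‖ > 1/(4λ)`; in particular `∑_{n ∈ C₁·C₂} ‖nα‖ = ∞`. -/
theorem stmt2 (C₁ C₂ : Set ℕ) (hC₁0 : 0 ∉ C₁) (hC₁ : C₁.Infinite) (hC₂ : C₂.Infinite)
    (lam : ℝ) (hlam : 1 < lam)
    (hsub : ∀ᶠ k in Filter.atTop,
      (Nat.nth (· ∈ C₁) (k + 1) : ℝ) ≤ lam * Nat.nth (· ∈ C₁) k)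
    (α : ℝ) (hα : Irrational α) :
    {n : ℕ | (∃ m₁ ∈ C₁, ∃ m₂ ∈ C₂, n = m₁ * m₂) ∧
      1 / (4 * lam) < intDist ((n : ℝ) * α)}.Infinite :=
  stmt2_general C₁ C₂ hC₁ hC₂ lam hsub α hα
end

section
/- Let C ⊆ ℕ and suppose that for every q ≥ 2, #{ n ∈ C : q ∤ n } > Σ_{r < q, r ∣ q} (q/r − 2). Then FS(C) + qℤ = ℤ for every q ∈ ℕ, i.e., finite sums of elements of C cover all residue classes modulo every q. -/
/-!
Call a residue `x` mod `q` reachable from a finite set `A` if it is a sum of a subset of `A`.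
Fix `q ≥ 2` and a set `P` of `q - 1` elements of `C` not divisible by `q` (the term `r = 1`
of the hypothesis is already `q - 2`). Adding the elements
of `P` one at a time, either every step enlarges the set of reachable residues, which then
exhausts `ℤ/q`, or at some point the reachable set `S` of some `A ⊆ P` is invariant under
translation by some `a ∈ P`. In the second case `S` is invariant under the subgroup generated
by `a`, i.e. by `r = gcd(a, q) < q`; by induction some subset sum `s` of `C` is `≡ m (mod r)`,
and moving the part of `s` coming from `A` into `S` and correcting by a multiple of `r`
inside `S` gives `m (mod q)`. Nonemptiness of the final sum is obtained by working modulo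
`2q` with a target that is not `0 (mod 2q)`.
-/

open Finset Pointwise

section SubsetSums

variable {ι G : Type*} [AddCommGroup G] [DecidableEq G]

def subsetSums (f : ι → G) (A : Finset ι) : Finset G :=
  A.powerset.image fun J => ∑ i ∈ J, f i

variable {f : ι → G} {A : Finset ι}

lemma mem_subsetSums {x : G} : x ∈ subsetSums f A ↔ ∃ J ⊆ A, ∑ i ∈ J, f i = x := by
  simp [subsetSums]

lemma sum_mem_subsetSums {J : Finset ι} (h : J ⊆ A) : ∑ i ∈ J, f i ∈ subsetSums f A :=
  mem_subsetSums.2 ⟨J, h, rfl⟩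

lemma subsetSums_mono {B : Finset ι} (h : A ⊆ B) : subsetSums f A ⊆ subsetSums f B :=
  image_subset_image (powerset_mono.2 h)

lemma card_subsetSums_insert_of_notMem_stabilizer [DecidableEq ι] {a : ι} (ha : a ∉ A)
    (hst : f a ∉ AddAction.stabilizer G (subsetSums f A)) :
    #(subsetSums f A) < #(subsetSums f (insert a A)) := by
  obtain ⟨x, hx, hxa⟩ : ∃ x ∈ subsetSums f A, f a + x ∉ subsetSums f A := by
    by_contra! hsub
    refine hst (AddAction.mem_stabilizer_iff.2 (eq_of_subset_of_card_le ?_ ?_))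
    · intro y hy
      obtain ⟨x, hx, rfl⟩ := mem_vadd_finset.1 hy
      exact hsub x hx
    · rw [card_vadd_finset]
  have hxa_mem : f a + x ∈ subsetSums f (insert a A) := by
    obtain ⟨J, hJA, rfl⟩ := mem_subsetSums.1 hx
    rw [← sum_insert fun h => ha (hJA h)]
    exact sum_mem_subsetSums (insert_subset_insert a hJA)
  calc #(subsetSums f A) < #(insert (f a + x) (subsetSums f A)) := by
        rw [card_insert_of_notMem hxa]; omega
    _ ≤ #(subsetSums f (insert a A)) :=
        card_le_card (insert_subset hxa_mem (subsetSums_mono (subset_insert a A)))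

lemma exists_mem_stabilizer_subsetSums_or_card_lt [DecidableEq ι] (P : Finset ι) :
    (∃ A ⊆ P, ∃ a ∈ P, f a ∈ AddAction.stabilizer G (subsetSums f A)) ∨
      #P < #(subsetSums f P) := by
  induction P using Finset.induction_on with
  | empty => simp [subsetSums]
  | @insert a P ha ih =>
    rcases ih with ⟨A, hAP, b, hbP, hb⟩ | hP
    · exact Or.inl ⟨A, hAP.trans (subset_insert a P), b, mem_insert_of_mem hbP, hb⟩
    by_cases hst : f a ∈ AddAction.stabilizer G (subsetSums f P)
    · exact Or.inl ⟨P, subset_insert a P, a, mem_insert_self a P, hst⟩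
    · right
      have := card_subsetSums_insert_of_notMem_stabilizer ha hst
      rw [card_insert_of_notMem ha]
      omega

lemma exists_sum_eq_of_sub_mem_stabilizer [DecidableEq ι] (D : Finset ι) {m : G}
    (hm : m - ∑ i ∈ D, f i ∈ AddAction.stabilizer G (subsetSums f A)) :
    ∃ F ⊆ D ∪ A, ∑ i ∈ F, f i = m := by
  have hsplit := sum_inter_add_sum_sdiff D A f
  have hmem : m - ∑ i ∈ D \ A, f i ∈ subsetSums f A := by
    have := (AddAction.mem_stabilizer_finset.1 hm (∑ i ∈ D ∩ A, f i)).2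
      (sum_mem_subsetSums inter_subset_right)
    convert this using 1
    rw [vadd_eq_add, ← hsplit]
    abel
  obtain ⟨J, hJA, hJ⟩ := mem_subsetSums.1 hmem
  have hdisj : Disjoint (D \ A) J := disjoint_of_subset_right hJA sdiff_disjoint
  refine ⟨(D \ A) ∪ J, union_subset_union sdiff_subset hJA, ?_⟩
  rw [sum_union hdisj, hJ, add_sub_cancel]

end SubsetSums

lemma natCast_gcd_mem_zmultiples (a q : ℕ) :
    ((a.gcd q : ℕ) : ZMod q) ∈ AddSubgroup.zmultiples (a : ZMod q) := by
  refine ⟨a.gcdA q, ?_⟩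
  have := congrArg (Int.cast : ℤ → ZMod q) (Nat.gcd_eq_gcd_ab a q)
  push_cast at this
  simp [this, zsmul_eq_mul, mul_comm]

lemma sub_two_le_sum_filter_divisors {q : ℕ} (hq : 2 ≤ q) :
    q - 2 ≤ ∑ r ∈ q.divisors.filter (· < q), (q / r - 2) := by
  have h1 : 1 ∈ q.divisors.filter (· < q) := by
    simp only [mem_filter, Nat.one_mem_divisors]
    omega
  simpa using single_le_sum (f := fun r => q / r - 2) (fun _ _ => Nat.zero_le _) h1

def SubsetSumsCoverMod (C : Set ℕ) (q : ℕ) : Prop :=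
  ∀ m : ℤ, ∃ F : Finset ℕ, ↑F ⊆ C ∧ (q : ℤ) ∣ m - ∑ n ∈ F, (n : ℤ)

lemma SubsetSumsCoverMod.of_forall_zmod {C : Set ℕ} {q : ℕ}
    (h : ∀ m : ℤ, ∃ F : Finset ℕ, ↑F ⊆ C ∧ ∑ n ∈ F, (n : ZMod q) = m) :
    SubsetSumsCoverMod C q := by
  intro m
  obtain ⟨F, hFC, hF⟩ := h m
  exact ⟨F, hFC, (ZMod.intCast_eq_intCast_iff_dvd_sub _ _ _).1 (by push_cast; exact hF)⟩

lemma SubsetSumsCoverMod.of_mem_stabilizer {C : Set ℕ} {q a : ℕ} {A : Finset ℕ}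
    (hAC : ↑A ⊆ C) (ha : (a : ZMod q) ∈
      AddAction.stabilizer (ZMod q) (subsetSums (Nat.cast : ℕ → ZMod q) A))
    (h : SubsetSumsCoverMod C (a.gcd q)) : SubsetSumsCoverMod C q := by
  refine .of_forall_zmod fun m => ?_
  obtain ⟨D, hDC, k, hk⟩ := h m
  have hmD : (m : ZMod q) - ∑ n ∈ D, (n : ZMod q) ∈
      AddAction.stabilizer (ZMod q) (subsetSums (Nat.cast : ℕ → ZMod q) A) := by
    apply (AddSubgroup.zmultiples_le.2 (natCast_gcd_mem_zmultiples a q)).trans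
      (AddSubgroup.zmultiples_le.2 ha)
    refine ⟨k, ?_⟩
    have := congrArg (Int.cast : ℤ → ZMod q) hk
    push_cast at this
    simp [this, zsmul_eq_mul, mul_comm]
  obtain ⟨F, hF, hFm⟩ := exists_sum_eq_of_sub_mem_stabilizer D hmD
  exact ⟨F, (coe_subset.2 hF).trans (by simpa using Set.union_subset hDC hAC), hFm⟩

theorem subsetSumsCoverMod_of_forall_card {C : Set ℕ}
    (hC : ∀ q, 2 ≤ q → ∃ P : Finset ℕ, ↑P ⊆ {n ∈ C | ¬ q ∣ n} ∧ q - 1 ≤ #P) :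
    ∀ q, 0 < q → SubsetSumsCoverMod C q := by
  intro q
  induction q using Nat.strong_induction_on with
  | _ q IH =>
  intro hq
  obtain rfl | hq2 : q = 1 ∨ 2 ≤ q := by omega
  · exact fun _ => ⟨∅, by simp, by simp⟩
  have : NeZero q := ⟨by omega⟩
  obtain ⟨P, hPC, hP⟩ := hC q hq2
  rcases exists_mem_stabilizer_subsetSums_or_card_lt (f := (Nat.cast : ℕ → ZMod q)) P with
    ⟨A, hAP, a, haP, ha⟩ | hcard
  · have hqa : ¬ q ∣ a := (hPC haP).2
    have hrq : a.gcd q < q := (Nat.le_of_dvd hq (Nat.gcd_dvd_right a q)).lt_of_ne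
      fun h => hqa (h ▸ Nat.gcd_dvd_left a q)
    exact .of_mem_stabilizer (fun n hn => (hPC (hAP hn)).1) ha
      (IH _ hrq (Nat.gcd_pos_of_pos_right a hq))
  · have huniv : subsetSums (Nat.cast : ℕ → ZMod q) P = univ :=
      eq_univ_of_card _ (le_antisymm (card_le_univ _) (by rw [ZMod.card]; omega))
    refine .of_forall_zmod fun m => ?_
    obtain ⟨J, hJP, hJ⟩ := mem_subsetSums.1 (huniv ▸ mem_univ (m : ZMod q))
    exact ⟨J, fun n hn => (hPC (hJP hn)).1, hJ⟩

lemma SubsetSumsCoverMod.exists_nonempty {C : Set ℕ} {q : ℕ}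
    (h : SubsetSumsCoverMod C (2 * q)) (hq : 0 < q) (m : ℤ) :
    ∃ F : Finset ℕ, ↑F ⊆ C ∧ F.Nonempty ∧ (q : ℤ) ∣ m - ∑ n ∈ F, (n : ℤ) := by
  obtain ⟨t, hmt, ht⟩ : ∃ t : ℤ, (q : ℤ) ∣ m - t ∧ ¬ (2 * q : ℤ) ∣ t := by
    by_cases hm : (2 * q : ℤ) ∣ m
    · refine ⟨m + q, by simp, fun h => ?_⟩
      have := Int.le_of_dvd (by omega) ((dvd_add_right hm).1 h)
      omega
    · exact ⟨m, by simp, hm⟩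
  obtain ⟨F, hFC, hF⟩ := h t
  push_cast at hF
  refine ⟨F, hFC, nonempty_iff_ne_empty.2 ?_, ?_⟩
  · rintro rfl
    exact ht (by simpa using hF)
  · have := dvd_add hmt ((Dvd.intro_left 2 rfl).trans hF)
    rwa [sub_add_sub_cancel] at this

/-- If for every `q ≥ 2` the number of elements of `C` not divisible by `q` exceeds
`∑_{r < q, r ∣ q} (q/r - 2)`, then finite sums of elements of `C` cover all residue
classes modulo every `q ≥ 1`. -/
theorem stmt4 (C : Set ℕ)
    (h : ∀ q : ℕ, 2 ≤ q → ∃ F : Finset ℕ, ↑F ⊆ {n ∈ C | ¬ q ∣ n} ∧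
      (∑ r ∈ q.divisors.filter (· < q), (q / r - 2)) < F.card) :
    ∀ q : ℕ, 1 ≤ q → ∀ m : ℤ, ∃ F : Finset ℕ, ↑F ⊆ C ∧ F.Nonempty ∧
      (q : ℤ) ∣ m - ∑ n ∈ F, (n : ℤ) := by
  have hC : ∀ q, 2 ≤ q → ∃ P : Finset ℕ, ↑P ⊆ {n ∈ C | ¬ q ∣ n} ∧ q - 1 ≤ #P := by
    intro q hq
    obtain ⟨P, hPC, hP⟩ := h q hq
    have := sub_two_le_sum_filter_divisors hq
    exact ⟨P, hPC, by omega⟩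
  intro q hq
  exact (subsetSumsCoverMod_of_forall_card hC (2 * q) (by omega)).exists_nonempty hq
end

section
/- Every piecewise syndetic subset of ℕ is weakly dispersing: if A ⊆ ℕ is such that A + F is thick for some finite F ⊆ ℕ₀, then for every irrational α ∈ ℝ the closure of { nα mod 1 : n ∈ A } in ℝ/ℤ contains a nonempty open set. -/
/-!
If the natural multiples of `a` are dense in a compact group, then every nonempty open set is hit
by `x + j • a` for some `j ≤ k`, with `k` independent of `x` (compactness). Since `A + F` contains
arbitrarily long intervals, `A • a + F • a` therefore meets every nonempty open set, so the finitely
many closed translates `closure (A • a) + f • a`, `f ∈ F`, cover the group. By Baire's theorem one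
of them, hence `closure (A • a)` itself, has nonempty interior. For `a = α` irrational in `ℝ/ℤ`
the multiples are dense by Kronecker's theorem.
-/

open Set Pointwise

def IsThick (T : Set ℕ) : Prop :=
  ∀ k : ℕ, ∃ n : ℕ, ∀ i ≤ k, n + i ∈ T

section

variable {G : Type*} [AddGroup G] [TopologicalSpace G] [ContinuousAdd G] [CompactSpace G]
  {a : G}

theorem DenseRange.exists_bounded_nsmul_add_mem (ha : DenseRange (· • a : ℕ → G))
    {U : Set G} (hU : IsOpen U) (hne : U.Nonempty) :
    ∃ k : ℕ, ∀ x : G, ∃ j ≤ k, x + j • a ∈ U := by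
  have hcover : (univ : Set G) ⊆ ⋃ j : ℕ, (· + j • a) ⁻¹' U := fun x _ ↦ by
    obtain ⟨j, u, hu, hju⟩ := ha.exists_mem_open
      ((Homeomorph.addLeft (-x)).isOpenMap U hU) (hne.image _)
    exact mem_iUnion.2 ⟨j, by simpa [← hju] using hu⟩
  obtain ⟨t, ht⟩ := isCompact_univ.elim_finite_subcover _
    (fun j ↦ hU.preimage (continuous_add_const (j • a))) hcover
  refine ⟨t.sup id, fun x ↦ ?_⟩
  obtain ⟨j, hj, hx⟩ := mem_iUnion₂.1 (ht (mem_univ x))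
  exact ⟨j, Finset.le_sup (f := id) hj, hx⟩

theorem DenseRange.dense_iUnion_image_nsmul_add_nsmul (ha : DenseRange (· • a : ℕ → G))
    {A : Set ℕ} {F : Finset ℕ} (hAF : IsThick (A + F)) :
    Dense (⋃ f : F, (· + (f : ℕ) • a) '' ((· • a) '' A)) := by
  refine dense_iff_inter_open.2 fun U hU hne ↦ ?_
  obtain ⟨k, hk⟩ := ha.exists_bounded_nsmul_add_mem hU hne
  obtain ⟨n, hn⟩ := hAF k
  obtain ⟨j, hj, hU⟩ := hk (n • a)
  obtain ⟨b, hb, f, hf, hbf⟩ := hn j hj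
  refine ⟨(b + f) • a, by rwa [show b + f = n + j from hbf, add_nsmul], ?_⟩
  exact mem_iUnion.2 ⟨⟨f, hf⟩, b • a, mem_image_of_mem _ hb, (add_nsmul a b f).symm⟩

theorem DenseRange.interior_closure_image_nsmul_nonempty [BaireSpace G]
    (ha : DenseRange (· • a : ℕ → G)) {A : Set ℕ} {F : Finset ℕ} (hAF : IsThick (A + F)) :
    (interior (closure ((· • a) '' A))).Nonempty := by
  set C := closure ((· • a) '' A)
  have hcover : ⋃ f : F, Homeomorph.addRight ((f : ℕ) • a) '' C = univ := by
    rw [← (ha.dense_iUnion_image_nsmul_add_nsmul hAF).closure_eq, closure_iUnion_of_finite]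
    exact iUnion_congr fun f ↦ (Homeomorph.addRight ((f : ℕ) • a)).image_closure _
  obtain ⟨f, hf⟩ := nonempty_interior_of_iUnion_of_closed
    (fun f : F ↦ (Homeomorph.addRight ((f : ℕ) • a)).isClosed_image.2 isClosed_closure) hcover
  rw [← Homeomorph.image_interior] at hf
  exact hf.of_image

end

/-- Every piecewise syndetic subset of `ℕ` is weakly dispersing: if `A + F` is thick
for some finite `F`, then for every irrational `α` the closure of `Aα` in `ℝ/ℤ` has
nonempty interior. -/
theorem stmt7 (A : Set ℕ) (F : Finset ℕ)
    (hthick : ∀ k : ℕ, ∃ n : ℕ, ∀ i ≤ k, ∃ a ∈ A, ∃ f ∈ F, n + i = a + f)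
    (α : ℝ) (hα : Irrational α) :
    (interior (closure
      ((fun n : ℕ => (((n : ℝ) * α : ℝ) : AddCircle (1 : ℝ))) '' A))).Nonempty := by
  have hdense : DenseRange (· • (α : AddCircle (1 : ℝ)) : ℕ → AddCircle (1 : ℝ)) :=
    denseRange_zsmul_iff_nsmul.1 (AddCircle.denseRange_zsmul_coe_iff.2 (by rwa [div_one]))
  have hAF : IsThick (A + F) := by
    simpa only [IsThick, mem_add, Finset.mem_coe, eq_comm] using hthick
  simpa [← nsmul_eq_mul, AddCircle.coe_nsmul] using
    hdense.interior_closure_image_nsmul_nonempty hAF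
end

section
/- Let (m_k) be a strictly increasing sequence of positive integers with m_{k+1} − m_k → ∞, and fix β ∈ ℝ/ℤ. Then for every irrational α ∈ ℝ/ℤ there exists a sequence (n_k) of positive integers with m_k ≤ n_k < m_{k+1} for all k and ‖n_k α − β‖ → 0, where ‖·‖ denotes distance to 0 in ℝ/ℤ. -/
/-!
Since the integer multiples of an irrational rotation `a` are dense in the compact circle,
finitely many balls `B(z • a, ε)` with `|z| ≤ K` cover it. Translating by `(M + K) • a` shows
that every window `[M, M + 2K]` of nonnegative integers contains some `n` with `n • a` within
`ε` of any prescribed point. Once the gaps `m_{k+1} - m_k` exceed the window length, the best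
`n` in `[m_k, m_{k+1})` is therefore `ε`-close to `β`.
-/

open Filter Topology Metric

theorem exists_abs_le_dist_zsmul_lt {G : Type*} [SeminormedAddCommGroup G] [CompactSpace G]
    {a : G} (ha : DenseRange (· • a : ℤ → G)) {ε : ℝ} (hε : 0 < ε) :
    ∃ K : ℕ, ∀ y : G, ∃ z : ℤ, |z| ≤ K ∧ dist (z • a) y < ε := by
  let U : ℕ → Set G := fun K => ⋃ z ∈ Finset.Icc (-(K : ℤ)) K, ball (z • a) ε
  have hU_open : ∀ K, IsOpen (U K) := fun K => isOpen_biUnion fun _ _ => isOpen_ball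
  have hU_cover : Set.univ ⊆ ⋃ K, U K := by
    intro y _
    obtain ⟨z, hz⟩ := ha.exists_dist_lt y hε
    refine Set.mem_iUnion.2 ⟨z.natAbs, Set.mem_biUnion (x := z) ?_ (mem_ball.2 hz)⟩
    simp only [Finset.coe_Icc, Set.mem_Icc, Int.natCast_natAbs]
    exact abs_le.1 le_rfl
  have hU_mono : Monotone U := fun K K' hK =>
    Set.biUnion_subset_biUnion_left fun z hz => by
      simp only [Finset.coe_Icc, Set.mem_Icc] at hz ⊢
      omega
  obtain ⟨K, hK⟩ := isCompact_univ.elim_directed_cover U hU_open hU_cover hU_mono.directed_le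
  refine ⟨K, fun y => ?_⟩
  obtain ⟨z, hz, hy⟩ := Set.mem_iUnion₂.1 (hK (Set.mem_univ y))
  exact ⟨z, abs_le.2 (Finset.mem_Icc.1 hz), mem_ball'.1 hy⟩

theorem exists_window_dist_nsmul_lt {G : Type*} [SeminormedAddCommGroup G] [CompactSpace G]
    {a : G} (ha : DenseRange (· • a : ℤ → G)) {ε : ℝ} (hε : 0 < ε) :
    ∃ L : ℕ, ∀ (M : ℕ) (x : G), ∃ n, M ≤ n ∧ n < M + L ∧ dist (n • a) x < ε := by
  obtain ⟨K, hK⟩ := exists_abs_le_dist_zsmul_lt ha hε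
  refine ⟨2 * K + 1, fun M x => ?_⟩
  obtain ⟨z, hzK, hz⟩ := hK (x - (M + K : ℕ) • a)
  obtain ⟨hzl, hzu⟩ := abs_le.1 hzK
  have hz0 : 0 ≤ (M + K : ℤ) + z := by omega
  refine ⟨((M + K : ℤ) + z).toNat, by omega, by omega, ?_⟩
  calc dist (((M + K : ℤ) + z).toNat • a) x
      = dist ((M + K : ℕ) • a + z • a) ((M + K : ℕ) • a + (x - (M + K : ℕ) • a)) := by
        rw [add_sub_cancel, ← natCast_zsmul, ← natCast_zsmul, ← add_zsmul, Int.toNat_of_nonneg hz0]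
        push_cast; rfl
    _ = dist (z • a) (x - (M + K : ℕ) • a) := dist_add_left _ _ _
    _ < ε := hz

theorem exists_tendsto_of_forall_window {X : Type*} [PseudoMetricSpace X] {f : ℕ → X} {x : X}
    (hf : ∀ ε > 0, ∃ L : ℕ, ∀ M : ℕ, ∃ n, M ≤ n ∧ n < M + L ∧ dist (f n) x < ε)
    {m : ℕ → ℕ} (hm : StrictMono m) (hgap : Tendsto (fun k => m (k + 1) - m k) atTop atTop) :
    ∃ n : ℕ → ℕ, (∀ k, m k ≤ n k ∧ n k < m (k + 1)) ∧ Tendsto (fun k => f (n k)) atTop (𝓝 x) := by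
  choose n hn_mem hn_min using fun k =>
    (Finset.Ico (m k) (m (k + 1))).exists_min_image (fun j => dist (f j) x)
      (Finset.nonempty_Ico.2 (hm k.lt_succ_self))
  refine ⟨n, fun k => Finset.mem_Ico.1 (hn_mem k), Metric.tendsto_atTop.2 fun ε hε => ?_⟩
  obtain ⟨L, hL⟩ := hf ε hε
  obtain ⟨N, hN⟩ := (hgap.eventually_ge_atTop L).exists_forall_of_atTop
  refine ⟨N, fun k hk => ?_⟩
  obtain ⟨j, hj_ge, hj_lt, hj⟩ := hL (m k)
  have hj_mem : j ∈ Finset.Ico (m k) (m (k + 1)) := by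
    have := hN k hk
    have := hm k.lt_succ_self
    exact Finset.mem_Ico.2 ⟨hj_ge, by omega⟩
  exact (hn_min k j hj_mem).trans_lt hj

theorem stmt8_general (m : ℕ → ℕ) (hm : StrictMono m)
    (hgap : Filter.Tendsto (fun k => m (k + 1) - m k) Filter.atTop Filter.atTop)
    (β : AddCircle (1 : ℝ)) (α : ℝ) (hα : Irrational α) :
    ∃ n : ℕ → ℕ, (∀ k, m k ≤ n k ∧ n k < m (k + 1)) ∧
      Filter.Tendsto (fun k => dist ((((n k : ℝ) * α : ℝ) : AddCircle (1 : ℝ))) β)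
        Filter.atTop (nhds 0) := by
  have hdense : DenseRange (· • (α : AddCircle (1 : ℝ)) : ℤ → AddCircle (1 : ℝ)) :=
    AddCircle.denseRange_zsmul_coe_iff.2 (by rwa [div_one])
  have hwindow : ∀ ε > 0, ∃ L : ℕ, ∀ M : ℕ, ∃ n, M ≤ n ∧ n < M + L ∧
      dist (((n : ℝ) * α : ℝ) : AddCircle (1 : ℝ)) β < ε := by
    intro ε hε
    obtain ⟨L, hL⟩ := exists_window_dist_nsmul_lt hdense hε
    refine ⟨L, fun M => ?_⟩
    simpa only [← nsmul_eq_mul, AddCircle.coe_nsmul] using hL M β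
  obtain ⟨n, hn, hlim⟩ := exists_tendsto_of_forall_window hwindow hm hgap
  exact ⟨n, hn, tendsto_iff_dist_tendsto_zero.1 hlim⟩

/-- If `(m_k)` is strictly increasing with `m_{k+1} - m_k → ∞` and `β ∈ ℝ/ℤ`, then for
every irrational `α` there is a sequence `(n_k)` with `m_k ≤ n_k < m_{k+1}` and
`‖n_k α - β‖ → 0`. -/
theorem stmt8 (m : ℕ → ℕ) (hm : StrictMono m) (hm0 : ∀ k, 0 < m k)
    (hgap : Filter.Tendsto (fun k => m (k + 1) - m k) Filter.atTop Filter.atTop)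
    (β : AddCircle (1 : ℝ)) (α : ℝ) (hα : Irrational α) :
    ∃ n : ℕ → ℕ, (∀ k, m k ≤ n k ∧ n k < m (k + 1)) ∧
      Filter.Tendsto (fun k => dist ((((n k : ℝ) * α : ℝ) : AddCircle (1 : ℝ))) β)
        Filter.atTop (nhds 0) :=
  stmt8_general m hm hgap β α hα
end

section
/- Let A ⊆ ℕ be sublacunary and let S ⊆ ℝ/ℤ have 0 as a limit point (0 is in the closure of S \ {0}). Then A·S = { n·s : n ∈ A, s ∈ S } is dense in ℝ/ℤ. -/
/-!
Given a target `y` and `ε > 0`, sublacunarity gives `K` with `n_{k+1} < (1 + ε) n_k` for `k ≥ K`,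
and the limit point gives `s ∈ S \ {0}` with a real lift `b`, `0 < |b| < ε / n_K`. Replacing
`(b, y)` by `(-b, -y)` we may take `b > 0`. The reals `n_k b` (`k ≥ K`) then start below `ε`, tend
to infinity, and advance by less than `ε` while they are at most `1`; so one of them lands in
`(t, t + ε)`, where `t ∈ [0, 1)` lifts `y`.
-/

open Set Filter

theorem exists_mem_Ioo_of_step_lt {x : ℕ → ℝ} {t δ : ℝ} (h0 : x 0 < t + δ)
    (hunb : ∃ k, t < x k) (hstep : ∀ k, x k ≤ t → x (k + 1) < x k + δ) :
    ∃ k, x k ∈ Ioo t (t + δ) := by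
  classical
  refine ⟨Nat.find hunb, Nat.find_spec hunb, ?_⟩
  rcases hm : Nat.find hunb with _ | j
  · exact h0
  · have hj : x j ≤ t := not_lt.mp (Nat.find_min hunb (by omega))
    linarith [hstep j hj]

theorem exists_natCast_mul_mem_Ioo_of_lt_one_add_mul {f : ℕ → ℕ} (hf : StrictMono f) {K : ℕ}
    {b t ε : ℝ} (hb : 0 < b) (ht : t ≤ 1) (hε : 0 < ε)
    (hK : ∀ k ≥ K, (f (k + 1) : ℝ) < (1 + ε) * f k) (hKb : f K * b < t + ε) :
    ∃ k, (f k : ℝ) * b ∈ Ioo t (t + ε) := by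
  have hunb : ∃ k, t < f (K + k) * b := by
    have hf_tendsto : Tendsto (fun k => f (K + k)) atTop atTop :=
      (hf.comp (strictMono_id.const_add K)).tendsto_atTop
    exact (((tendsto_natCast_atTop_atTop.comp hf_tendsto).atTop_mul_const hb).eventually_gt_atTop
      t).exists
  obtain ⟨k, hk⟩ := exists_mem_Ioo_of_step_lt (x := fun k => (f (K + k) : ℝ) * b) hKb hunb
    fun k hk => by
      have hpos : (0 : ℝ) ≤ f (K + k) * b := by positivity
      calc (f (K + k + 1) : ℝ) * b < (1 + ε) * f (K + k) * b := by
            gcongr; exact hK _ (by omega)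
        _ ≤ f (K + k) * b + ε := by nlinarith
  exact ⟨K + k, hk⟩

theorem UnitAddCircle.exists_coe_eq_abs_eq_norm (s : UnitAddCircle) :
    ∃ b : ℝ, (b : UnitAddCircle) = s ∧ |b| = ‖s‖ := by
  obtain ⟨x, rfl⟩ := QuotientAddGroup.mk_surjective s
  refine ⟨x - round x, ?_, (UnitAddCircle.norm_eq (x := x)).symm⟩
  simp

theorem UnitAddCircle.dist_coe_le (x y : ℝ) :
    dist (x : UnitAddCircle) (y : UnitAddCircle) ≤ |x - y| := by
  rw [dist_eq_norm, ← AddCircle.coe_sub]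
  simpa using QuotientAddGroup.norm_mk_le_norm (S := AddSubgroup.zmultiples (1:ℝ)) (m := x - y)

theorem exists_dist_nsmul_coe_lt {f : ℕ → ℕ} (hf : StrictMono f) {K : ℕ} {ε : ℝ} (hε : 0 < ε)
    (hK : ∀ k ≥ K, (f (k + 1) : ℝ) < (1 + ε) * f k) {b : ℝ} (hb : b ≠ 0)
    (hKb : f K * |b| < ε) (y : UnitAddCircle) :
    ∃ k, dist (f k • (b : UnitAddCircle)) y < ε := by
  wlog hb_pos : 0 < b generalizing b y
  · obtain ⟨k, hk⟩ := this (neg_ne_zero.mpr hb) (by rwa [abs_neg]) (-y)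
      (neg_pos.mpr (lt_of_le_of_ne (not_lt.mp hb_pos) hb))
    refine ⟨k, ?_⟩
    rwa [AddCircle.coe_neg, smul_neg, dist_neg_neg] at hk
  obtain ⟨u, rfl⟩ := QuotientAddGroup.mk_surjective y
  rw [abs_of_pos hb_pos] at hKb
  obtain ⟨k, hk_gt, hk_lt⟩ := exists_natCast_mul_mem_Ioo_of_lt_one_add_mul hf hb_pos
    (Int.fract_lt_one u).le hε hK (by linarith [Int.fract_nonneg u])
  refine ⟨k, ?_⟩
  calc dist (f k • (b : UnitAddCircle)) ((u : ℝ) : UnitAddCircle)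
      = dist (((f k * b : ℝ)) : UnitAddCircle) ((Int.fract u : ℝ) : UnitAddCircle) := by
        rw [AddCircle.coe_fract, ← nsmul_eq_mul, AddCircle.coe_nsmul]
    _ ≤ |f k * b - Int.fract u| := UnitAddCircle.dist_coe_le _ _
    _ < ε := abs_sub_lt_iff.mpr ⟨by linarith, by linarith⟩

/-- If `A ⊆ ℕ` is sublacunary and `0` is a limit point of `S ⊆ ℝ/ℤ`, then
`A·S = { n • s : n ∈ A, s ∈ S }` is dense in `ℝ/ℤ`. -/
theorem stmt11 (A : Set ℕ) (hA : A.Infinite) (h0 : 0 ∉ A)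
    (hsub : Filter.Tendsto
      (fun k => (Nat.nth (· ∈ A) (k + 1) : ℝ) / (Nat.nth (· ∈ A) k : ℝ))
      Filter.atTop (nhds 1))
    (S : Set (AddCircle (1 : ℝ)))
    (h0S : (0 : AddCircle (1 : ℝ)) ∈ closure (S \ {0})) :
    Dense {y : AddCircle (1 : ℝ) | ∃ n ∈ A, ∃ s ∈ S, y = n • s} := by
  set f := Nat.nth (· ∈ A)
  have hf : StrictMono f := Nat.nth_strictMono hA
  have hfA (k : ℕ) : f k ∈ A := Nat.nth_mem_of_infinite hA k
  have hf_pos (k : ℕ) : (0 : ℝ) < f k :=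
    Nat.cast_pos.mpr (Nat.pos_of_ne_zero fun h => h0 (h ▸ hfA k))
  refine Metric.dense_iff.mpr fun y ε hε => ?_
  obtain ⟨K, hK⟩ :=
    (hsub.eventually (gt_mem_nhds (lt_add_of_pos_right 1 hε))).exists_forall_of_atTop
  obtain ⟨s, ⟨hsS, hs0⟩, hs⟩ := Metric.mem_closure_iff.mp h0S _ (div_pos hε (hf_pos K))
  obtain ⟨b, rfl, hbs⟩ := UnitAddCircle.exists_coe_eq_abs_eq_norm s
  have hb : b ≠ 0 := by rintro rfl; exact hs0 rfl
  rw [dist_zero_left, ← hbs, lt_div_iff₀' (hf_pos K)] at hs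
  obtain ⟨k, hk⟩ := exists_dist_nsmul_coe_lt hf hε
    (fun k hk => (div_lt_iff₀ (hf_pos k)).mp (hK k hk)) hb hs y
  exact ⟨_, hk, f k, hfA k, b, hsS, rfl⟩
end

section
/- Fix a, b ≥ 2 integers such that max(a,b) ≥ 3, and let A = { a^{n²} b^{m²} : n, m ∈ ℕ₀ }. Then FS(A) has density zero: (1/N)·#(FS(A) ∩ [1, N]) → 0 as N → ∞. In particular, A is not complete. -/
/-!
Every element of `A ∩ [1, N]` has the form `a^{n²} b^{m²}` with `n ≤ √(log_a N)` and
`m ≤ √(log_b N)`, so there are at most `(√(log_a N) + 1)(√(log_b N) + 1)` of them, and every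
element of `FS(A) ∩ [1, N]` is the sum of a subset of them. Hence
`#(FS(A) ∩ [1, N]) ≤ 2^{(√(log_a N) + 1)(√(log_b N) + 1)} = N^{θ + o(1)}` with
`θ = log 2 / √(log a · log b)`, and `θ < 1` exactly because `max(a, b) ≥ 3`.
-/

/-- The finite sum set of `A`: all sums of nonempty finite subsets of `A`. -/
def FS (A : Set ℕ) : Set ℕ :=
  {n | ∃ F : Finset ℕ, ↑F ⊆ A ∧ F.Nonempty ∧ ∑ m ∈ F, m = n}

open Filter Real

theorem ncard_FS_inter_Icc_le_two_pow {A : Set ℕ} {N : ℕ} (T : Finset ℕ)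
    (hT : ∀ x ∈ A, x ≤ N → x ∈ T) : (FS A ∩ Set.Icc 1 N).ncard ≤ 2 ^ T.card := by
  have hsub : FS A ∩ Set.Icc 1 N ⊆ ↑(T.powerset.image fun G => ∑ m ∈ G, m) := by
    rintro x ⟨⟨F, hFA, -, rfl⟩, -, hxN⟩
    refine Finset.mem_image.2 ⟨F, Finset.mem_powerset.2 fun y hy => hT y (hFA hy) ?_, rfl⟩
    exact (Finset.single_le_sum (fun i _ => Nat.zero_le i) hy).trans hxN
  calc (FS A ∩ Set.Icc 1 N).ncard ≤ _ := Set.ncard_le_ncard hsub (Finset.finite_toSet _)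
    _ = _ := Set.ncard_coe_finset _
    _ ≤ T.powerset.card := Finset.card_image_le
    _ = 2 ^ T.card := Finset.card_powerset T

theorem le_sqrt_log_of_pow_sq_le {a n N : ℕ} (ha : 1 < a) (h : a ^ (n ^ 2) ≤ N) :
    n ≤ Nat.sqrt (Nat.log a N) :=
  Nat.le_sqrt.2 (sq n ▸ Nat.le_log_of_pow_le ha h)

theorem ncard_FS_pow_sq_mul_pow_sq_le {a b : ℕ} (ha : 1 < a) (hb : 1 < b) (N : ℕ) :
    (FS {x : ℕ | ∃ n m : ℕ, x = a ^ (n ^ 2) * b ^ (m ^ 2)} ∩ Set.Icc 1 N).ncard ≤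
      2 ^ ((Nat.sqrt (Nat.log a N) + 1) * (Nat.sqrt (Nat.log b N) + 1)) := by
  refine (ncard_FS_inter_Icc_le_two_pow ((Finset.range (Nat.sqrt (Nat.log a N) + 1) ×ˢ
    Finset.range (Nat.sqrt (Nat.log b N) + 1)).image
    fun p : ℕ × ℕ => a ^ (p.1 ^ 2) * b ^ (p.2 ^ 2)) ?_).trans ?_
  · rintro _ ⟨n, m, rfl⟩ hN
    refine Finset.mem_image.2 ⟨(n, m), Finset.mem_product.2
      ⟨Finset.mem_range_succ_iff.2 ?_, Finset.mem_range_succ_iff.2 ?_⟩, rfl⟩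
    · exact le_sqrt_log_of_pow_sq_le ha ((Nat.le_mul_of_pos_right _ (by positivity)).trans hN)
    · exact le_sqrt_log_of_pow_sq_le hb ((Nat.le_mul_of_pos_left _ (by positivity)).trans hN)
  · exact Nat.pow_le_pow_right two_pos (Finset.card_image_le.trans (by simp))

theorem natSqrt_log_le {a : ℕ} (ha : 1 < a) (N : ℕ) :
    (Nat.sqrt (Nat.log a N) : ℝ) ≤ √(log N) / √(log a) := by
  have hloga : 0 < log a := log_pos (by exact_mod_cast ha)
  rw [← sqrt_div' _ hloga.le,
    le_sqrt (Nat.cast_nonneg _) (div_nonneg (log_natCast_nonneg N) hloga.le)]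
  calc (Nat.sqrt (Nat.log a N) : ℝ) ^ 2 ≤ Nat.log a N := by exact_mod_cast Nat.sqrt_le' _
    _ ≤ log N / log a := Real.natLog_le_logb N a

theorem ncard_FS_pow_sq_mul_pow_sq_div_le {a b : ℕ} (ha : 1 < a) (hb : 1 < b) {N : ℕ}
    (hN : 1 ≤ N) :
    ((FS {x : ℕ | ∃ n m : ℕ, x = a ^ (n ^ 2) * b ^ (m ^ 2)} ∩ Set.Icc 1 N).ncard : ℝ) / N ≤
      exp (log 2 * (√(log N) / √(log a) + 1) * (√(log N) / √(log b) + 1) - log N) := by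
  set k := (Nat.sqrt (Nat.log a N) + 1) * (Nat.sqrt (Nat.log b N) + 1)
  have hNpos : (0 : ℝ) < N := by exact_mod_cast hN
  have hk : (k : ℝ) ≤ (√(log N) / √(log a) + 1) * (√(log N) / √(log b) + 1) := by
    push_cast [k]
    gcongr <;> exact natSqrt_log_le ‹_› N
  calc ((FS {x : ℕ | ∃ n m : ℕ, x = a ^ (n ^ 2) * b ^ (m ^ 2)} ∩ Set.Icc 1 N).ncard : ℝ) / N
      ≤ (2 : ℝ) ^ k / N := by
        gcongr
        exact_mod_cast ncard_FS_pow_sq_mul_pow_sq_le ha hb N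
    _ = exp (k * log 2 - log N) := by rw [exp_sub, exp_nat_mul, exp_log two_pos, exp_log hNpos]
    _ ≤ _ := exp_le_exp.2 (by nlinarith [log_pos one_lt_two])

theorem tendsto_quadratic_atBot {c : ℝ} (hc : c < 0) (d e : ℝ) :
    Tendsto (fun u => c * u ^ 2 + d * u + e) atTop atBot := by
  have h : Tendsto (fun u => u * (c * u + d)) atTop atBot :=
    tendsto_id.atTop_mul_atBot₀
      (tendsto_atBot_add_const_right _ d (tendsto_id.const_mul_atTop_of_neg hc))
  exact tendsto_atBot_add_const_right _ e (h.congr fun u => by ring)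

theorem log_two_lt_sqrt_log_mul_sqrt_log {a b : ℕ} (ha : 2 ≤ a) (hb : 2 ≤ b)
    (hab : 3 ≤ max a b) : log 2 < √(log a) * √(log b) := by
  have hsqrt_log_two_lt {x : ℕ} (hx : 3 ≤ x) : √(log 2) < √(log x) :=
    sqrt_lt_sqrt (log_nonneg one_le_two) (log_lt_log two_pos (by exact_mod_cast hx))
  have hsqrt_log_two_le {x : ℕ} (hx : 2 ≤ x) : √(log 2) ≤ √(log x) :=
    sqrt_le_sqrt (log_le_log two_pos (by exact_mod_cast hx))
  have hpos : 0 < √(log 2) := sqrt_pos.2 (log_pos one_lt_two)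
  rw [← mul_self_sqrt (log_nonneg one_le_two)]
  rcases le_max_iff.1 hab with h | h
  · exact mul_lt_mul (hsqrt_log_two_lt h) (hsqrt_log_two_le hb) hpos (sqrt_nonneg _)
  · exact mul_lt_mul' (hsqrt_log_two_le ha) (hsqrt_log_two_lt h) hpos.le
      (hpos.trans_le (hsqrt_log_two_le ha))

/-- For `a, b ≥ 2` with `max(a,b) ≥ 3`, the set `A = { a^{n²} b^{m²} }` has
`FS(A)` of density zero; in particular `A` is not complete. -/
theorem stmt12 (a b : ℕ) (ha : 2 ≤ a) (hb : 2 ≤ b) (hab : 3 ≤ max a b) :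
    Filter.Tendsto
      (fun N : ℕ =>
        ((FS {x : ℕ | ∃ n m : ℕ, x = a ^ (n ^ 2) * b ^ (m ^ 2)} ∩ Set.Icc 1 N).ncard : ℝ) / N)
      Filter.atTop (nhds 0) := by
  set α := √(log a)
  set β := √(log b)
  have hαβ := log_two_lt_sqrt_log_mul_sqrt_log ha hb hab
  have hθ : log 2 / (α * β) - 1 < 0 :=
    sub_neg.2 ((div_lt_one ((log_pos one_lt_two).trans hαβ)).2 hαβ)
  have hexponent : Tendsto (fun u => log 2 * (u / α + 1) * (u / β + 1) - u ^ 2) atTop atBot :=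
    (tendsto_quadratic_atBot hθ (log 2 * (1 / α + 1 / β)) (log 2)).congr fun u => by ring
  have hbound : Tendsto (fun N : ℕ => exp (log 2 * (√(log N) / α + 1) * (√(log N) / β + 1)
      - √(log N) ^ 2)) atTop (nhds 0) :=
    tendsto_exp_atBot.comp (hexponent.comp
      (tendsto_sqrt_atTop.comp (tendsto_log_atTop.comp tendsto_natCast_atTop_atTop)))
  refine squeeze_zero' (Eventually.of_forall fun N => by positivity) ?_ hbound
  filter_upwards [eventually_ge_atTop 1] with N hN
  rw [sq_sqrt (log_natCast_nonneg N)]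
  exact ncard_FS_pow_sq_mul_pow_sq_div_le (by omega) (by omega) hN
end

section
/- Fix s ∈ ℕ, integers a₁,...,a_s ≥ 2, and polynomials P₁,...,P_s with nonnegative integer values on ℕ₀, P_i(0) = 0, each nonconstant. If Σ_{i=1}^s 1/deg(P_i) < 1, then the set A = { a₁^{P₁(n₁)} ⋯ a_s^{P_s(n_s)} : n₁,...,n_s ∈ ℕ₀ } satisfies that FS(A) has density zero; in particular A is not complete. -/
/-! At most `O((log N)^σ)` elements of `A`, with `σ = ∑ 1 / deg Pᵢ`, lie below `N`: the exponents
`Pᵢ(nᵢ)` of such an element are at most `log₂ N`, which forces `nᵢ = O((log N)^(1 / deg Pᵢ))`.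
Every element of `FS(A)` up to `N` is the sum of a subset of them, so
`#(FS(A) ∩ [1, N]) ≤ 2^(O((log N)^σ))`, and this is `o(N)` because `σ < 1`. -/

open Filter Polynomial Real Topology

theorem Polynomial.exists_le_mul_rpow_of_abs_eval_le (Q : ℝ[X]) (hd : 0 < Q.natDegree) :
    ∃ C : ℝ, 0 ≤ C ∧ ∀ T : ℝ, 1 ≤ T → ∀ x : ℝ, 0 ≤ x → |Q.eval x| ≤ T →
      x ≤ C * T ^ (1 / Q.natDegree : ℝ) := by
  set d := Q.natDegree
  have hdeg : (X ^ d : ℝ[X]).degree ≤ Q.degree := by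
    rw [degree_X_pow, degree_eq_natDegree (ne_zero_of_natDegree_gt hd)]
  obtain ⟨c, hc⟩ := (isBigO_atTop_of_degree_le _ _ hdeg).bound
  obtain ⟨B, hB⟩ := eventually_atTop.1 hc
  refine ⟨|B| + |c| ^ (1 / d : ℝ), by positivity, fun T hT x hx hxT => ?_⟩
  have hT1 : 1 ≤ T ^ (1 / d : ℝ) := one_le_rpow hT (by positivity)
  have hc0 : 0 ≤ |c| ^ (1 / d : ℝ) := by positivity
  rcases lt_or_ge x B with hxB | hxB
  · nlinarith [le_abs_self B]
  have hpow : x ^ d ≤ |c| * T := by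
    have := hB x hxB
    simp only [eval_pow, eval_X, Real.norm_eq_abs, abs_pow, abs_of_nonneg hx] at this
    exact this.trans (mul_le_mul (le_abs_self c) hxT (abs_nonneg _) (abs_nonneg _))
  calc x = (x ^ d) ^ (1 / d : ℝ) := by rw [one_div, pow_rpow_inv_natCast hx hd.ne']
    _ ≤ (|c| * T) ^ (1 / d : ℝ) := by gcongr
    _ = |c| ^ (1 / d : ℝ) * T ^ (1 / d : ℝ) := mul_rpow (abs_nonneg c) (by linarith)
    _ ≤ (|B| + |c| ^ (1 / d : ℝ)) * T ^ (1 / d : ℝ) := by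
        gcongr; exact le_add_of_nonneg_left (abs_nonneg B)

theorem Polynomial.exists_natCast_le_mul_rpow_of_eval_le (P : ℤ[X]) (hd : 0 < P.natDegree)
    (hval : ∀ n : ℕ, 0 ≤ P.eval (n : ℤ)) :
    ∃ C : ℝ, 0 ≤ C ∧ ∀ L n : ℕ, 1 ≤ L → (P.eval (n : ℤ)).toNat ≤ L →
      (n : ℝ) ≤ C * (L : ℝ) ^ (1 / P.natDegree : ℝ) := by
  set Q := P.map (Int.castRingHom ℝ)
  have hQ : Q.natDegree = P.natDegree := natDegree_map_eq_of_injective Int.cast_injective P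
  obtain ⟨C, hC0, hC⟩ := Q.exists_le_mul_rpow_of_abs_eval_le (hQ ▸ hd)
  refine ⟨C, hC0, fun L n hL hn => ?_⟩
  rw [← hQ]
  refine hC L (by exact_mod_cast hL) n n.cast_nonneg ?_
  have hPn : P.eval (n : ℤ) ≤ L := by omega
  have : Q.eval (n : ℝ) = ((P.eval (n : ℤ) : ℤ) : ℝ) := by
    simp [Q]
  rw [this, abs_of_nonneg (by exact_mod_cast hval n)]
  exact_mod_cast hPn

theorem le_log_of_prod_pow_le {ι : Type*} [Fintype ι] {b : ℕ} (hb : 1 < b) {a : ι → ℕ}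
    (ha : ∀ i, b ≤ a i) {e : ι → ℕ} {N : ℕ} (h : ∏ i, a i ^ e i ≤ N) (i : ι) :
    e i ≤ Nat.log b N := by
  have hprod : 0 < ∏ i, a i ^ e i := Finset.prod_pos fun j _ => pow_pos (by have := ha j; omega) _
  have hdvd : a i ^ e i ∣ ∏ i, a i ^ e i := Finset.dvd_prod_of_mem _ (Finset.mem_univ i)
  exact Nat.le_log_of_pow_le hb
    ((Nat.pow_le_pow_left (ha i) _).trans ((Nat.le_of_dvd hprod hdvd).trans h))

theorem ncard_range_inter_Iic_le {ι : Type*} [Fintype ι] [DecidableEq ι] (f : (ι → ℕ) → ℕ)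
    (N : ℕ) (m : ι → ℕ) (hm : ∀ n, f n ≤ N → ∀ i, n i ≤ m i) :
    (Set.range f ∩ Set.Iic N).ncard ≤ ∏ i, (m i + 1) := by
  have hsub : Set.range f ∩ Set.Iic N ⊆
      ((Fintype.piFinset fun i => Finset.range (m i + 1)).image f : Set ℕ) := by
    rintro _ ⟨⟨n, rfl⟩, hn⟩
    simp only [Finset.coe_image, Set.mem_image, Finset.mem_coe, Fintype.mem_piFinset,
      Finset.mem_range, Nat.lt_succ_iff]
    exact ⟨n, hm n hn, rfl⟩
  calc (Set.range f ∩ Set.Iic N).ncard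
      ≤ ((Fintype.piFinset fun i => Finset.range (m i + 1)).image f : Set ℕ).ncard :=
        Set.ncard_le_ncard hsub (Finset.finite_toSet _)
    _ ≤ (Fintype.piFinset fun i => Finset.range (m i + 1)).card := by
        rw [Set.ncard_coe_finset]; exact Finset.card_image_le
    _ = ∏ i, (m i + 1) := by simp

theorem ncard_range_prod_pow_inter_Iic_le {ι : Type*} [Fintype ι] {b : ℕ} (hb : 1 < b)
    {a : ι → ℕ} (ha : ∀ i, b ≤ a i) {e : ι → ℕ → ℕ} {C θ : ι → ℝ} (hC : ∀ i, 0 ≤ C i)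
    (hθ : ∀ i, 0 ≤ θ i) (he : ∀ i L n, 1 ≤ L → e i n ≤ L → (n : ℝ) ≤ C i * (L : ℝ) ^ θ i)
    {N : ℕ} (hN : b ≤ N) :
    (((Set.range fun n : ι → ℕ => ∏ i, a i ^ e i (n i)) ∩ Set.Iic N).ncard : ℝ) ≤
      (∏ i, (C i + 1)) * (Nat.log b N : ℝ) ^ ∑ i, θ i := by
  classical
  set L := Nat.log b N
  have hL : 1 ≤ L := Nat.log_pos hb hN
  have hL' : (1 : ℝ) ≤ L := by exact_mod_cast hL
  have hcard := ncard_range_inter_Iic_le _ N (fun i => ⌊C i * (L : ℝ) ^ θ i⌋₊)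
    fun n hn i => Nat.le_floor (he i L (n i) hL (le_log_of_prod_pow_le hb ha hn i))
  calc _ ≤ ((∏ i, (⌊C i * (L : ℝ) ^ θ i⌋₊ + 1) : ℕ) : ℝ) := by exact_mod_cast hcard
    _ = ∏ i, ((⌊C i * (L : ℝ) ^ θ i⌋₊ : ℝ) + 1) := by push_cast; rfl
    _ ≤ ∏ i, ((C i + 1) * (L : ℝ) ^ θ i) := by
        gcongr with i
        have h1 : 1 ≤ (L : ℝ) ^ θ i := one_le_rpow hL' (hθ i)
        have h2 : (⌊C i * (L : ℝ) ^ θ i⌋₊ : ℝ) ≤ C i * (L : ℝ) ^ θ i :=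
          Nat.floor_le (by have := hC i; positivity)
        nlinarith
    _ = _ := by rw [Finset.prod_mul_distrib, rpow_sum_of_pos (by linarith)]

theorem ncard_FS_inter_Iic_le (A : Set ℕ) (N : ℕ) :
    (FS A ∩ Set.Iic N).ncard ≤ 2 ^ (A ∩ Set.Iic N).ncard := by
  classical
  have hfin : (A ∩ Set.Iic N).Finite := (Set.finite_Iic N).inter_of_right A
  have hsub : FS A ∩ Set.Iic N ⊆ (hfin.toFinset.powerset.image fun F => ∑ m ∈ F, m : Set ℕ) := by
    rintro _ ⟨⟨F, hFA, -, rfl⟩, hFN⟩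
    simp only [Finset.coe_image, Set.mem_image, Finset.mem_coe, Finset.mem_powerset]
    refine ⟨F, fun m hm => hfin.mem_toFinset.2 ⟨hFA hm, ?_⟩, rfl⟩
    exact (Finset.single_le_sum (fun _ _ => Nat.zero_le _) hm).trans hFN
  calc (FS A ∩ Set.Iic N).ncard
      ≤ (hfin.toFinset.powerset.image fun F => ∑ m ∈ F, m : Set ℕ).ncard :=
        Set.ncard_le_ncard hsub (Finset.finite_toSet _)
    _ ≤ hfin.toFinset.powerset.card := by
        rw [Set.ncard_coe_finset]; exact Finset.card_image_le
    _ = 2 ^ (A ∩ Set.Iic N).ncard := by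
        rw [Finset.card_powerset, Set.ncard_eq_toFinset_card _ hfin]

theorem tendsto_mul_rpow_sub_atBot (c : ℝ) {σ : ℝ} (hσ : σ < 1) :
    Tendsto (fun u : ℝ => c * u ^ σ - u) atTop atBot := by
  have hlim : Tendsto (fun u : ℝ => c * u ^ (-(1 - σ)) - 1) atTop (𝓝 (c * 0 - 1)) :=
    ((tendsto_rpow_neg_atTop (by linarith)).const_mul c).sub_const 1
  refine (tendsto_id.atTop_mul_neg (by simp) hlim).congr' ?_
  filter_upwards [eventually_gt_atTop 0] with u hu
  have : u * u ^ (-(1 - σ)) = u ^ σ := by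
    rw [mul_comm, ← rpow_add_one hu.ne']; ring_nf
  simp only [id, mul_sub, mul_one, mul_left_comm u c, this]

theorem tendsto_two_rpow_mul_logb_rpow_div (c : ℝ) {σ : ℝ} (hσ : σ < 1) :
    Tendsto (fun x : ℝ => (2 : ℝ) ^ (c * logb 2 x ^ σ) / x) atTop (𝓝 0) := by
  refine ((tendsto_rpow_atBot_of_base_gt_one 2 one_lt_two).comp
    ((tendsto_mul_rpow_sub_atBot c hσ).comp (tendsto_logb_atTop one_lt_two))).congr' ?_
  filter_upwards [eventually_gt_atTop 0] with x hx
  simp only [Function.comp_apply]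
  rw [rpow_sub two_pos, rpow_logb two_pos (by norm_num) hx]

theorem stmt13_general (s : ℕ) (a : Fin s → ℕ) (ha : ∀ i, 2 ≤ a i)
    (P : Fin s → Polynomial ℤ)
    (hdeg : ∀ i, 0 < (P i).natDegree)
    (hval : ∀ i, ∀ n : ℕ, 0 ≤ (P i).eval (n : ℤ))
    (hsum : ∑ i, (1 : ℝ) / ((P i).natDegree : ℝ) < 1) :
    Filter.Tendsto
      (fun N : ℕ =>
        ((FS {x : ℕ | ∃ n : Fin s → ℕ,
            x = ∏ i, (a i) ^ ((P i).eval ((n i : ℤ))).toNat} ∩ Set.Icc 1 N).ncard : ℝ) / N)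
      Filter.atTop (nhds 0) := by
  set A := {x : ℕ | ∃ n : Fin s → ℕ, x = ∏ i, (a i) ^ ((P i).eval ((n i : ℤ))).toNat}
  set σ := ∑ i, (1 : ℝ) / ((P i).natDegree : ℝ)
  have hA : A = Set.range fun n : Fin s → ℕ => ∏ i, (a i) ^ ((P i).eval ((n i : ℤ))).toNat := by
    ext; simp [A, eq_comm]
  choose C hC0 hC using fun i => (P i).exists_natCast_le_mul_rpow_of_eval_le (hdeg i) (hval i)
  have hcount : ∀ N : ℕ, 2 ≤ N → ((FS A ∩ Set.Icc 1 N).ncard : ℝ) ≤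
      2 ^ ((∏ i, (C i + 1)) * logb 2 N ^ σ) := by
    intro N hN
    have hσ : 0 ≤ σ := Finset.sum_nonneg fun i _ => by positivity
    have hK : 0 ≤ ∏ i, (C i + 1) := Finset.prod_nonneg fun i _ => by linarith [hC0 i]
    have hAN := hA ▸ ncard_range_prod_pow_inter_Iic_le one_lt_two ha hC0
      (fun i => by positivity) hC hN
    calc ((FS A ∩ Set.Icc 1 N).ncard : ℝ) ≤ (FS A ∩ Set.Iic N).ncard := by
          exact_mod_cast Set.ncard_le_ncard (Set.inter_subset_inter_right _ Set.Icc_subset_Iic_self)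
            ((Set.finite_Iic N).inter_of_right _)
      _ ≤ 2 ^ ((A ∩ Set.Iic N).ncard : ℝ) := by
          rw [rpow_natCast]; exact_mod_cast ncard_FS_inter_Iic_le A N
      _ ≤ 2 ^ ((∏ i, (C i + 1)) * logb 2 N ^ σ) := by
          gcongr
          · norm_num
          refine hAN.trans ?_
          gcongr
          exact_mod_cast Real.natLog_le_logb N 2
  refine tendsto_of_tendsto_of_tendsto_of_le_of_le' tendsto_const_nhds
    ((tendsto_two_rpow_mul_logb_rpow_div (∏ i, (C i + 1)) hsum).comp tendsto_natCast_atTop_atTop)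
    (Eventually.of_forall fun N => by positivity) ?_
  filter_upwards [eventually_ge_atTop 2] with N hN
  exact div_le_div_of_nonneg_right (hcount N hN) N.cast_nonneg

/-- If `∑ 1/deg(P_i) < 1`, then `A = { ∏ a_i^{P_i(n_i)} }` has `FS(A)` of density
zero; in particular `A` is not complete. -/
theorem stmt13 (s : ℕ) (a : Fin s → ℕ) (ha : ∀ i, 2 ≤ a i)
    (P : Fin s → Polynomial ℤ)
    (hdeg : ∀ i, 0 < (P i).natDegree)
    (hval : ∀ i, ∀ n : ℕ, 0 ≤ (P i).eval (n : ℤ))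
    (h0 : ∀ i, (P i).eval 0 = 0)
    (hsum : ∑ i, (1 : ℝ) / ((P i).natDegree : ℝ) < 1) :
    Filter.Tendsto
      (fun N : ℕ =>
        ((FS {x : ℕ | ∃ n : Fin s → ℕ,
            x = ∏ i, (a i) ^ ((P i).eval ((n i : ℤ))).toNat} ∩ Set.Icc 1 N).ncard : ℝ) / N)
      Filter.atTop (nhds 0) :=
  stmt13_general s a ha P hdeg hval hsum
end

section
/- Fix d ∈ ℕ and a polynomial P of degree d with P(ℕ₀) ⊆ ℕ₀ and P(0) = 0. For all distinct n₀,...,n_d ∈ ℕ there exist integers z₀,...,z_d with max_i |z_i| ≤ C·M^{d(d+1)/2} and 0 < |Σ_{i=0}^d z_i P(n_i)| ≤ C·M^{d(d+1)/2}, where M = max_{i,j} |n_j − n_i| and C > 0 is a constant depending only on P. -/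
/-!
Let `V` be the Vandermonde matrix of the points `x_i = n_i` and let `z` be the last row of
`adj V`. From `adj V * V = det V • 1`, the sums `∑ z_i x_i ^ k` vanish for `k < d` and equal
`det V` for `k = d`, so `∑ z_i P(x_i) = det V * lc(P) ≠ 0`. Both `det V` and the entries `z_i`
(up to sign the Vandermonde determinants of `d` of the points) are products of at most
`(d + 1).choose 2` differences `x_j - x_i`, each of absolute value at most `M`.
-/

open Finset Polynomial Matrix

theorem Fin.sum_card_Ioi (n : ℕ) : ∑ i : Fin n, #(Ioi i) = n.choose 2 := by
  have h := Fintype.card_product_filter_lt (α := Fin n)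
  rw [Fintype.card_fin, card_filter, Fintype.sum_prod_type] at h
  simpa [Finset.filter_lt_eq_Ioi] using h

theorem abs_det_vandermonde_le {R : Type*} [CommRing R] [LinearOrder R] [IsStrictOrderedRing R]
    {n : ℕ} (v : Fin n → R) {M : R} (hM : ∀ i j, |v i - v j| ≤ M) :
    |(vandermonde v).det| ≤ M ^ n.choose 2 := by
  rw [det_vandermonde, ← Fin.sum_card_Ioi, ← prod_pow_eq_pow_sum]
  simp only [abs_prod, ← prod_const]
  exact prod_le_prod (fun _ _ => prod_nonneg fun _ _ => abs_nonneg _)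
    fun i _ => prod_le_prod (fun _ _ => abs_nonneg _) fun j _ => hM j i

theorem sum_adjugate_vandermonde_mul_eval {R : Type*} [CommRing R] {n : ℕ} (v : Fin n → R)
    (k : Fin n) {p : R[X]} (hp : p.natDegree < n) :
    ∑ i, adjugate (vandermonde v) k i * p.eval (v i) = (vandermonde v).det * p.coeff k := by
  have h : ∀ j : Fin n, ∑ i, adjugate (vandermonde v) k i * v i ^ (j : ℕ) =
      if k = j then (vandermonde v).det else 0 := by
    intro j
    simpa [mul_apply, one_apply] using congrFun (congrFun (adjugate_mul (vandermonde v)) k) j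
  simp_rw [eval_eq_sum_range' hp, ← Fin.sum_univ_eq_sum_range, mul_sum]
  rw [sum_comm]
  simp_rw [mul_left_comm _ (p.coeff _), ← mul_sum, h]
  simp [mul_comm]

theorem adjugate_vandermonde_last {R : Type*} [CommRing R] {n : ℕ} (v : Fin (n + 1) → R)
    (i : Fin (n + 1)) :
    adjugate (vandermonde v) (Fin.last n) i =
      (-1) ^ ((i : ℕ) + n) * (vandermonde (v ∘ i.succAbove)).det := by
  rw [adjugate_fin_succ_eq_det_submatrix, Fin.succAbove_last]
  rfl

theorem abs_adjugate_vandermonde_last_le {R : Type*} [CommRing R] [LinearOrder R]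
    [IsStrictOrderedRing R] {n : ℕ} (v : Fin (n + 1) → R) {M : R} (hM : ∀ i j, |v i - v j| ≤ M)
    (i : Fin (n + 1)) : |adjugate (vandermonde v) (Fin.last n) i| ≤ M ^ n.choose 2 := by
  rw [adjugate_vandermonde_last, abs_mul, abs_pow, abs_neg, abs_one, one_pow, one_mul]
  exact abs_det_vandermonde_le _ fun _ _ => hM _ _

theorem abs_natCast_sub_le_sup {ι : Type*} [Fintype ι] (n : ι → ℕ) (i j : ι) :
    |(n i : ℤ) - n j| ≤ ((univ.sup fun p : ι × ι => n p.1 - n p.2 : ℕ) : ℤ) := by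
  have hij := le_sup (f := fun p : ι × ι => n p.1 - n p.2) (mem_univ (i, j))
  have hji := le_sup (f := fun p : ι × ι => n p.1 - n p.2) (mem_univ (j, i))
  simp only at hij hji
  rw [abs_le]
  omega

theorem stmt14_general (d : ℕ) (hd : 1 ≤ d) (P : Polynomial ℤ) (hPdeg : P.natDegree = d) :
    ∃ C : ℕ, 0 < C ∧ ∀ n : Fin (d + 1) → ℕ, Function.Injective n →
      ∃ z : Fin (d + 1) → ℤ,
        (∀ i, |z i| ≤
          (C : ℤ) * ((Finset.univ.sup fun p : Fin (d + 1) × Fin (d + 1) =>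
            n p.1 - n p.2 : ℕ) : ℤ) ^ (d * (d + 1) / 2)) ∧
        0 < |∑ i, z i * P.eval ((n i : ℤ))| ∧
        |∑ i, z i * P.eval ((n i : ℤ))| ≤
          (C : ℤ) * ((Finset.univ.sup fun p : Fin (d + 1) × Fin (d + 1) =>
            n p.1 - n p.2 : ℕ) : ℤ) ^ (d * (d + 1) / 2) := by
  have hlc : P.coeff d ≠ 0 := by
    rw [← hPdeg, ← leadingCoeff, leadingCoeff_ne_zero]
    rintro rfl
    rw [natDegree_zero] at hPdeg
    omega
  refine ⟨(P.coeff d).natAbs, Int.natAbs_pos.mpr hlc, fun n hn => ?_⟩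
  set M : ℤ := ((univ.sup fun p : Fin (d + 1) × Fin (d + 1) => n p.1 - n p.2 : ℕ) : ℤ)
  set x : Fin (d + 1) → ℤ := fun i => n i
  have hx : Function.Injective x := fun i j h => hn (Nat.cast_injective h)
  have hM : ∀ i j, |x i - x j| ≤ M := abs_natCast_sub_le_sup n
  have hlast : (0 : Fin (d + 1)) ≠ Fin.last d :=
    Fin.ne_of_val_ne (by rw [Fin.val_zero, Fin.val_last]; omega)
  have hM1 : 1 ≤ M := (Int.one_le_abs (sub_ne_zero.mpr (hx.ne hlast))).trans (hM _ _)
  have hexp : d * (d + 1) / 2 = (d + 1).choose 2 := by rw [Nat.choose_two_right, mul_comm]; rfl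
  have hsum : ∑ i, adjugate (vandermonde x) (Fin.last d) i * P.eval (x i) =
      (vandermonde x).det * P.coeff d :=
    sum_adjugate_vandermonde_mul_eval x (Fin.last d) (by omega)
  rw [hexp, ← Int.abs_eq_natAbs]
  refine ⟨fun i => adjugate (vandermonde x) (Fin.last d) i, fun i => ?_, ?_, ?_⟩
  · calc |adjugate (vandermonde x) (Fin.last d) i| ≤ M ^ d.choose 2 :=
          abs_adjugate_vandermonde_last_le x hM i
      _ ≤ M ^ (d + 1).choose 2 := pow_le_pow_right₀ hM1 (Nat.choose_le_succ d 2)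
      _ ≤ |P.coeff d| * M ^ (d + 1).choose 2 :=
          le_mul_of_one_le_left (by positivity) (Int.one_le_abs hlc)
  · rw [hsum]
    exact abs_pos.mpr (mul_ne_zero (det_vandermonde_ne_zero_iff.mpr hx) hlc)
  · rw [hsum, abs_mul, mul_comm]
    exact mul_le_mul_of_nonneg_left (abs_det_vandermonde_le x hM) (abs_nonneg _)

/-- For a polynomial `P` of degree `d` with `P(ℕ₀) ⊆ ℕ₀` and `P(0) = 0`, and distinct
`n₀, …, n_d`, there exist integers `z₀, …, z_d` with `max |z_i| ≤ C·M^{d(d+1)/2}` and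
`0 < |∑ z_i P(n_i)| ≤ C·M^{d(d+1)/2}`, where `M = max |n_j - n_i|`. -/
theorem stmt14 (d : ℕ) (hd : 1 ≤ d) (P : Polynomial ℤ) (hPdeg : P.natDegree = d)
    (hP0 : P.eval 0 = 0) (hval : ∀ n : ℕ, 0 ≤ P.eval (n : ℤ)) :
    ∃ C : ℕ, 0 < C ∧ ∀ n : Fin (d + 1) → ℕ, Function.Injective n →
      ∃ z : Fin (d + 1) → ℤ,
        (∀ i, |z i| ≤
          (C : ℤ) * ((Finset.univ.sup fun p : Fin (d + 1) × Fin (d + 1) =>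
            n p.1 - n p.2 : ℕ) : ℤ) ^ (d * (d + 1) / 2)) ∧
        0 < |∑ i, z i * P.eval ((n i : ℤ))| ∧
        |∑ i, z i * P.eval ((n i : ℤ))| ≤
          (C : ℤ) * ((Finset.univ.sup fun p : Fin (d + 1) × Fin (d + 1) =>
            n p.1 - n p.2 : ℕ) : ℤ) ^ (d * (d + 1) / 2) :=
  stmt14_general d hd P hPdeg
end

section
/- If A is a complete subset of ℕ (i.e., FS(A) is cofinite in ℕ), then there exists s ∈ ℕ such that #{ n ∈ A : n ≤ 2^N + s } ≥ N for all N ∈ ℕ. -/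
/-- If `A` is complete (i.e. `FS(A)` is cofinite in `ℕ`), then there exists `s` such
that `#{n ∈ A : n ≤ 2^N + s} ≥ N` for all `N ≥ 1`. -/
theorem stmt18 (A : Set ℕ) (h : ∃ t : ℕ, ∀ n : ℕ, t < n → n ∈ FS A) :
    ∃ s : ℕ, ∀ N : ℕ, 1 ≤ N → N ≤ (A ∩ Set.Icc 1 (2 ^ N + s)).ncard := by
  classical
  obtain ⟨t, ht⟩ := h
  refine ⟨t, fun N _ => ?_⟩
  set M := 2 ^ N + t with hM
  set T : Finset ℕ := (Finset.Icc 1 M).filter (· ∈ A) with hT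
  have key : ∀ n ∈ Finset.Icc (t + 1) M, ∃ F : Finset ℕ, F ⊆ T ∧ ∑ m ∈ F, m = n := by
    intro n hn
    simp only [Finset.mem_Icc] at hn
    obtain ⟨F, hFA, _, hFsum⟩ := ht n (by omega)
    refine ⟨F.erase 0, ?_, ?_⟩
    · intro x hx
      have hx0 : x ≠ 0 := Finset.ne_of_mem_erase hx
      have hxF : x ∈ F := Finset.mem_of_mem_erase hx
      have hxle : x ≤ n := hFsum ▸ Finset.single_le_sum (fun i _ => Nat.zero_le i) hxF
      simp only [hT, Finset.mem_filter, Finset.mem_Icc]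
      exact ⟨⟨Nat.one_le_iff_ne_zero.mpr hx0, le_trans hxle hn.2⟩, hFA hxF⟩
    · rw [show n = ∑ m ∈ F, m from hFsum.symm]
      exact Finset.sum_erase (f := fun m => m) F rfl
  set f : ℕ → Finset ℕ := fun n =>
    if hn : n ∈ Finset.Icc (t + 1) M then (key n hn).choose else ∅ with hf
  have hfsum : ∀ n ∈ Finset.Icc (t + 1) M, f n ⊆ T ∧ ∑ m ∈ f n, m = n := by
    intro n hn
    simp only [hf, dif_pos hn]
    exact (key n hn).choose_spec
  have hcard : (Finset.Icc (t + 1) M).card ≤ T.powerset.card := by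
    apply Finset.card_le_card_of_injOn f
    · intro n hn
      exact Finset.mem_powerset.mpr (hfsum n hn).1
    · intro a ha b hb hab
      have := (hfsum a ha).2
      rw [hab, (hfsum b hb).2] at this
      exact this.symm
  rw [Finset.card_powerset, Nat.card_Icc] at hcard
  have h2 : 2 ^ N ≤ 2 ^ T.card := by
    rw [hM] at hcard
    simpa using hcard
  have hN : N ≤ T.card := (Nat.pow_le_pow_iff_right one_lt_two).mp h2
  have hset : A ∩ Set.Icc 1 M = ↑T := by
    ext x
    simp only [hT, Set.mem_inter_iff, Set.mem_Icc, Finset.coe_filter, Set.mem_setOf_eq,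
      Finset.mem_Icc]
    tauto
  rw [hset, Set.ncard_coe_finset]
  exact hN
end

section
/- Let a, b ≥ 2 with log a / log b irrational, and suppose the sequence (b^{n_k} α) converges to 0 in ℝ/ℤ for some strictly increasing sequence (n_k) of naturals and some irrational α. Then for every ε > 0 and every cofinite set S' ⊆ ℕ, there exist k and ℓ such that the set { a^s b^{n_ℓ + j} α : s ∈ S', 0 ≤ j ≤ k } is 2·log(b)·ε-dense in ℝ/ℤ. -/
/-!
By Dirichlet's theorem some `d * β - p` with `β = log a / log b` is nonzero and tiny, so the
numbers `s * log a + j * log b` with `s ≥ N` and `j` bounded are `ε`-dense on every bounded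
interval far enough to the right. Writing `b ^ n_ℓ * α ≡ t (mod 1)` with `t ≠ 0` tiny (by
irrationality of `α`), the logarithms of the targets `y ∈ [1, 2]` shifted by `- log t` lie in such
an interval, and exponentiating turns the additive approximation into
`|a ^ s * b ^ j * t - y| ≤ 4 η` for a log-precision `η ≤ 1`.
-/

open Real

lemma exists_nat_mul_add_int_near {r : ℝ} (hr : r ≠ 0) (w : ℝ) :
    ∃ m : ℕ, ∃ q : ℤ, (m : ℝ) ≤ 1 / |r| ∧ |(q : ℝ) - w| ≤ 1 ∧ |m * r + q - w| ≤ |r| := by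
  wlog hr0 : 0 < r generalizing r w
  · obtain ⟨m, q, hm, hq, hmq⟩ :=
      this (neg_ne_zero.2 hr) (-w) (neg_pos.2 (lt_of_le_of_ne (not_lt.1 hr0) hr))
    refine ⟨m, -q, by simpa using hm, ?_, ?_⟩
    · rw [← abs_neg]; convert hq using 2; push_cast; ring
    · rw [← abs_neg r, ← abs_neg]; convert hmq using 2; push_cast; ring
  have hfract := Int.floor_add_fract w
  have hfract0 := Int.fract_nonneg w
  have hfract1 := Int.fract_lt_one w
  set m := ⌊Int.fract w / r⌋₊
  have hm : (m : ℝ) * r ≤ Int.fract w :=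
    (le_div_iff₀ hr0).1 (Nat.floor_le (div_nonneg hfract0 hr0.le))
  have hm1 : Int.fract w < (m + 1) * r := (div_lt_iff₀ hr0).1 (Nat.lt_floor_add_one _)
  refine ⟨m, ⌊w⌋, ?_, ?_, ?_⟩
  · rw [abs_of_pos hr0, le_div_iff₀ hr0]; linarith
  · rw [abs_le]; constructor <;> linarith
  · rw [abs_of_pos hr0, abs_le]; constructor <;> linarith

lemma Irrational.exists_nat_mul_sub_int_near {β : ℝ} (hβ : Irrational β) {ε : ℝ} (hε : 0 < ε) :
    ∃ d : ℕ, ∃ p : ℤ, d * β - p ≠ 0 ∧ |d * β - p| ≤ ε := by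
  obtain ⟨d, hd, -, hdβ⟩ :=
    Real.exists_nat_abs_mul_sub_round_le β (Nat.ceil_pos.2 (one_div_pos.2 hε))
  refine ⟨d, round (d * β), ((hβ.natCast_mul hd.ne').sub_intCast _).ne_zero, hdβ.trans ?_⟩
  rw [one_div_le (by positivity) hε]
  exact (Nat.le_ceil _).trans (le_add_of_nonneg_right zero_le_one)

lemma Irrational.exists_nat_mul_add_nat_near {β : ℝ} (hβ : Irrational β) {ε : ℝ} (hε : 0 < ε)
    (N : ℕ) :
    ∃ c : ℝ, ∀ M : ℝ, ∃ k : ℕ, ∀ y ∈ Set.Icc c M, ∃ s ≥ N, ∃ j ≤ k, |s * β + j - y| ≤ ε := by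
  obtain ⟨d, p, hr, hrε⟩ := hβ.exists_nat_mul_sub_int_near hε
  -- `c` is chosen so that the integer coefficient `q - m * p` found below is nonnegative
  refine ⟨N * β + |(p : ℝ)| / |d * β - p| + 1,
    fun M => ⟨⌈M - N * β + |(p : ℝ)| / |d * β - p| + 1⌉₊, fun y hy => ?_⟩⟩
  obtain ⟨m, q, hm, hq, hmq⟩ := exists_nat_mul_add_int_near hr (y - N * β)
  have hmp : |(m : ℝ) * p| ≤ |(p : ℝ)| / |d * β - p| :=
    calc |(m : ℝ) * p| = m * |(p : ℝ)| := by rw [abs_mul, Nat.abs_cast]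
      _ ≤ 1 / |d * β - p| * |(p : ℝ)| := by gcongr
      _ = |(p : ℝ)| / |d * β - p| := by ring
  have hq' := abs_le.1 hq
  have hmp' := abs_le.1 hmp
  obtain ⟨j, hj⟩ : ∃ j : ℕ, (j : ℤ) = q - m * p :=
    ⟨_, Int.toNat_of_nonneg (by exact_mod_cast (by linarith [hy.1] : (0 : ℝ) ≤ q - m * p))⟩
  have hjR : (j : ℝ) = q - m * p := by exact_mod_cast hj
  refine ⟨N + m * d, Nat.le_add_right _ _, j,
    Nat.cast_le.1 ((?_ : (j : ℝ) ≤ _).trans (Nat.le_ceil _)), ?_⟩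
  · linarith [hy.2]
  · calc |((N + m * d : ℕ) : ℝ) * β + j - y| = |m * (d * β - p) + q - (y - N * β)| := by
          push_cast; rw [hjR]; ring
      _ ≤ ε := hmq.trans hrε

lemma exists_pow_mul_pow_mul_near {a b : ℝ} (ha : 0 < a) (hb : 1 < b)
    (hirr : Irrational (log a / log b)) {η : ℝ} (hη : 0 < η) (hη1 : η ≤ 1) (N : ℕ) :
    ∃ τ > 0, ∀ T ∈ Set.Ioc 0 τ, ∃ k : ℕ, ∀ y ∈ Set.Icc (1 : ℝ) 2,
      ∃ s ≥ N, ∃ j ≤ k, |a ^ s * b ^ j * T - y| ≤ 4 * η := by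
  have hlb : 0 < log b := log_pos hb
  obtain ⟨c, hc⟩ := hirr.exists_nat_mul_add_nat_near (div_pos hη hlb) N
  refine ⟨exp (-(c * log b)), exp_pos _, fun T hT => ?_⟩
  have hlogT : log T ≤ -(c * log b) := (log_le_iff_le_exp hT.1).2 hT.2
  obtain ⟨k, hk⟩ := hc ((log 2 - log T) / log b)
  refine ⟨k, fun y hy => ?_⟩
  have hy0 : 0 < y := by linarith [hy.1]
  obtain ⟨s, hs, j, hj, hsj⟩ := hk ((log y - log T) / log b)
    ⟨by rw [le_div_iff₀ hlb]; linarith [log_nonneg hy.1],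
      by gcongr; exact hy.2⟩
  refine ⟨s, hs, j, hj, ?_⟩
  set δ := s * log a + j * log b + log T - log y
  have hδ : |δ| ≤ η := by
    have : δ = (s * (log a / log b) + j - (log y - log T) / log b) * log b := by
      field_simp; ring
    rw [this, abs_mul, abs_of_pos hlb]
    exact (le_div_iff₀ hlb).1 hsj
  have hexp : a ^ s * b ^ j * T = y * exp δ := by
    rw [← exp_log hy0, ← exp_add, add_sub_cancel, exp_add, exp_add, exp_log hT.1,
      exp_nat_mul, exp_nat_mul, exp_log ha, exp_log (by linarith)]
  calc |a ^ s * b ^ j * T - y| = y * |exp δ - 1| := by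
        rw [hexp, ← mul_sub_one, abs_mul, abs_of_pos hy0]
    _ ≤ 2 * (2 * η) := by
        gcongr
        · exact hy.2
        · exact (abs_exp_sub_one_le (hδ.trans hη1)).trans (by linarith)
    _ = 4 * η := by ring

lemma AddCircle.dist_coe_coe_le (p x y : ℝ) : dist (x : AddCircle p) y ≤ |x - y| := by
  rw [dist_eq_norm, ← AddCircle.coe_sub]
  exact QuotientAddGroup.norm_mk_le_norm

lemma exists_dist_coe_pow_mul_pow_mul_le {a b : ℝ} (ha : 0 < a) (hb : 1 < b)
    (hirr : Irrational (log a / log b)) {η : ℝ} (hη : 0 < η) (hη1 : η ≤ 1) (N : ℕ) :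
    ∃ τ > 0, ∀ t : ℝ, t ≠ 0 → |t| ≤ τ → ∃ k : ℕ, ∀ x : AddCircle (1 : ℝ),
      ∃ s ≥ N, ∃ j ≤ k, dist x ↑(a ^ s * b ^ j * t) ≤ 4 * η := by
  obtain ⟨τ, hτ, hnear⟩ := exists_pow_mul_pow_mul_near ha hb hirr hη hη1 N
  refine ⟨τ, hτ, fun t ht htτ => ?_⟩
  obtain ⟨k, hk⟩ := hnear |t| ⟨abs_pos.2 ht, htτ⟩
  have hdense : ∀ x : AddCircle (1 : ℝ),
      ∃ s ≥ N, ∃ j ≤ k, dist x ↑(a ^ s * b ^ j * |t|) ≤ 4 * η := by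
    intro x
    obtain ⟨x, rfl⟩ := QuotientAddGroup.mk_surjective x
    obtain ⟨s, hs, j, hj, hsj⟩ := hk (Int.fract x + 1)
      ⟨by linarith [Int.fract_nonneg x], by linarith [Int.fract_lt_one x]⟩
    have hrep : ((Int.fract x + 1 : ℝ) : AddCircle (1 : ℝ)) = x := by
      rw [AddCircle.coe_add, AddCircle.coe_fract, AddCircle.coe_period, add_zero]
    refine ⟨s, hs, j, hj, ?_⟩
    rw [← hrep, dist_comm]
    exact (AddCircle.dist_coe_coe_le _ _ _).trans hsj
  refine ⟨k, fun x => ?_⟩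
  rcases abs_choice t with h | h
  · exact h ▸ hdense x
  obtain ⟨s, hs, j, hj, hsj⟩ := hdense (-x)
  refine ⟨s, hs, j, hj, ?_⟩
  rwa [← dist_neg_neg, ← AddCircle.coe_neg, ← mul_neg, ← h]

lemma Irrational.exists_coe_eq_of_norm_coe_lt {x τ : ℝ} (hx : Irrational x)
    (h : ‖(x : AddCircle (1 : ℝ))‖ < τ) :
    ∃ t : ℝ, t ≠ 0 ∧ |t| ≤ τ ∧ (t : AddCircle (1 : ℝ)) = x := by
  refine ⟨x - round x, (hx.sub_intCast _).ne_zero, ?_, by simp⟩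
  rw [← UnitAddCircle.norm_eq]
  exact h.le

lemma AddCircle.coe_natCast_mul_of_coe_eq {p x y : ℝ} (h : (x : AddCircle p) = y) (m : ℕ) :
    ((m * x : ℝ) : AddCircle p) = (m * y : ℝ) := by
  simp only [← nsmul_eq_mul, AddCircle.coe_nsmul, h]

theorem stmt19_general (a b : ℕ) (ha : 2 ≤ a) (hb : 2 ≤ b)
    (hirr : Irrational (Real.log a / Real.log b))
    (n : ℕ → ℕ) (α : ℝ) (hα : Irrational α)
    (hconv : Filter.Tendsto
      (fun ℓ : ℕ => ((((b : ℝ) ^ n ℓ * α : ℝ)) : AddCircle (1 : ℝ)))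
      Filter.atTop (nhds 0)) :
    ∀ ε : ℝ, 0 < ε → ∀ S' : Set ℕ, (S'ᶜ).Finite →
      ∃ k ℓ : ℕ, ∀ x : AddCircle (1 : ℝ),
        ∃ s ∈ S', ∃ j ≤ k,
          dist x ((((a : ℝ) ^ s * (b : ℝ) ^ (n ℓ + j) * α : ℝ)) : AddCircle (1 : ℝ)) ≤
            2 * Real.log b * ε := by
  intro ε hε S' hS'
  obtain ⟨N, hN⟩ : ∃ N, ∀ s ≥ N, s ∈ S' :=
    Filter.mem_atTop_sets.1 (Nat.cofinite_eq_atTop ▸ Filter.mem_cofinite.2 hS')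
  have hb1 : (1 : ℝ) < b := by exact_mod_cast hb
  have hη : 0 < min (log b * ε / 2) 1 := lt_min (by have := log_pos hb1; positivity) one_pos
  obtain ⟨τ, hτ, hdense⟩ := exists_dist_coe_pow_mul_pow_mul_le
    (Nat.cast_pos.2 (by omega)) hb1 hirr hη (min_le_right _ _) N
  obtain ⟨ℓ, hℓ⟩ := (hconv.eventually (Metric.ball_mem_nhds 0 hτ)).exists
  obtain ⟨t, ht, htτ, hteq⟩ := Irrational.exists_coe_eq_of_norm_coe_lt
    (by simpa using hα.natCast_mul (pow_ne_zero (n ℓ) (by omega : b ≠ 0)))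
    (mem_ball_zero_iff.1 hℓ)
  obtain ⟨k, hk⟩ := hdense t ht htτ
  refine ⟨k, ℓ, fun x => ?_⟩
  obtain ⟨s, hs, j, hj, hx⟩ := hk x
  have hshift : (a : ℝ) ^ s * b ^ (n ℓ + j) * α = ((a ^ s * b ^ j : ℕ) : ℝ) * (b ^ n ℓ * α) := by
    push_cast; ring
  refine ⟨s, hN s hs, j, hj, ?_⟩
  rw [hshift, ← AddCircle.coe_natCast_mul_of_coe_eq hteq]
  push_cast
  linarith [min_le_left (log b * ε / 2) 1]

/-- If `log a / log b` is irrational and `b^{n_ℓ} α → 0` in `ℝ/ℤ`, then for every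
`ε > 0` and every cofinite `S' ⊆ ℕ` there are `k, ℓ` such that
`{ a^s b^{n_ℓ + j} α : s ∈ S', 0 ≤ j ≤ k }` is `2·log(b)·ε`-dense in `ℝ/ℤ`. -/
theorem stmt19 (a b : ℕ) (ha : 2 ≤ a) (hb : 2 ≤ b)
    (hirr : Irrational (Real.log a / Real.log b))
    (n : ℕ → ℕ) (hn : StrictMono n) (α : ℝ) (hα : Irrational α)
    (hconv : Filter.Tendsto
      (fun ℓ : ℕ => ((((b : ℝ) ^ n ℓ * α : ℝ)) : AddCircle (1 : ℝ)))
      Filter.atTop (nhds 0)) :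
    ∀ ε : ℝ, 0 < ε → ∀ S' : Set ℕ, (S'ᶜ).Finite →
      ∃ k ℓ : ℕ, ∀ x : AddCircle (1 : ℝ),
        ∃ s ∈ S', ∃ j ≤ k,
          dist x ((((a : ℝ) ^ s * (b : ℝ) ^ (n ℓ + j) * α : ℝ)) : AddCircle (1 : ℝ)) ≤
            2 * Real.log b * ε :=
  stmt19_general a b ha hb hirr n α hα hconv
end
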